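/- arXiv:1303.1041 — 6 statements merged into one kernel-verified Lean document; each statement's English description precedes it below -/
import Mathlib

section
/- Let Q be a quotient module of H²(𝔻) (closed M_z^*-invariant subspace), C_z = P_Q M_z|_Q the compressed shift, and L = ran(I_Q - C_z C_z^*) = ran(P_Q P_ℂ P_Q). Then Q equals the closed linear span of {P_Q M_z^l h : l ∈ ℕ, h ∈ L}. -/
open ContinuousLinearMap

open scoped InnerProductSpace

/-!
The generators lie in `Q`, so it suffices that no nonzero `d ∈ Q` is orthogonal to all of them.
Since `Q` is `S*`-invariant, `y = (S*)^l d` lies in `Q`, and pairing `d` with the generator built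
from `y` gives `|⟪1, (S*)^l d⟫|² = |⟪z^l, d⟫|²`. So every Taylor coefficient of `d` vanishes.
-/

section Module

variable {R M : Type*} [Semiring R] [AddCommMonoid M] [TopologicalSpace M] [Module R M]

theorem pow_apply_of_apply_eq_succ {S : M →L[R] M} {v : ℕ → M} (hS : ∀ m, S (v m) = v (m + 1))
    (l m : ℕ) : (S ^ l) (v m) = v (m + l) := by
  induction l with
  | zero => simp
  | succ l ih => rw [pow_succ', mul_apply_eq_comp, ih, hS, add_assoc]

theorem Set.MapsTo.pow_apply {T : M →L[R] M} {s : Set M} (h : Set.MapsTo T s s) (l : ℕ) :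
    Set.MapsTo (T ^ l) s s := by
  rw [FunLike.coe_pow_eq_iterate]
  exact h.iterate l

theorem ContinuousLinearMap.apply_eq_self_of_mem_range {P : M →L[R] M} (hP : IsIdempotentElem P)
    {x : M} (hx : x ∈ Set.range P) : P x = x := by
  obtain ⟨y, rfl⟩ := hx
  exact congr($hP y)

end Module

section InnerProductSpace

variable {𝕜 E : Type*} [RCLike 𝕜] [NormedAddCommGroup E] [InnerProductSpace 𝕜 E]

theorem HilbertBasis.eq_zero_of_forall_inner_eq_zero {ι : Type*} (b : HilbertBasis ι 𝕜 E) {x : E}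
    (h : ∀ i, ⟪b i, x⟫_𝕜 = 0) : x = 0 :=
  b.repr.map_eq_zero_iff.mp <| by ext i; simp [b.repr_apply_apply, h i]

theorem Submodule.eq_topologicalClosure_span_of_forall_inner_eq_zero [CompleteSpace E]
    {Q : Submodule 𝕜 E} (hQ : IsClosed (Q : Set E)) {s : Set E} (hsQ : s ⊆ Q)
    (h : ∀ d ∈ Q, (∀ g ∈ s, ⟪g, d⟫_𝕜 = 0) → d = 0) :
    Q = (span 𝕜 s).topologicalClosure := by
  set K := (span 𝕜 s).topologicalClosure
  have hKQ : K ≤ Q := topologicalClosure_minimal _ (span_le.mpr hsQ) hQ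
  refine le_antisymm (fun x hx => ?_) hKQ
  have hdK : x - K.starProjection x ∈ Kᗮ := K.sub_starProjection_mem_orthogonal x
  have hd0 : x - K.starProjection x = 0 :=
    h _ (Q.sub_mem hx (hKQ (K.starProjection_apply_mem x))) fun g hg =>
      (mem_orthogonal K _).mp hdK g (le_topologicalClosure _ (subset_span hg))
  rw [sub_eq_zero.mp hd0]
  exact K.starProjection_apply_mem x

variable [CompleteSpace E]

theorem inner_pow_apply_left (S : E →L[𝕜] E) (l : ℕ) (x y : E) :
    ⟪(S ^ l) x, y⟫_𝕜 = ⟪x, (adjoint S ^ l) y⟫_𝕜 := by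
  rw [← adjoint_inner_right, ← star_eq_adjoint, ← star_eq_adjoint, star_pow]

theorem eq_zero_of_forall_inner_adjoint_pow_eq_zero (b : HilbertBasis ℕ 𝕜 E) {S : E →L[𝕜] E}
    (hS : ∀ m, S (b m) = b (m + 1)) {x : E} (hx : ∀ l, ⟪b 0, (adjoint S ^ l) x⟫_𝕜 = 0) :
    x = 0 :=
  b.eq_zero_of_forall_inner_eq_zero fun l => by
    rw [← zero_add l, ← pow_apply_of_apply_eq_succ hS, inner_pow_apply_left, hx]

theorem ContinuousLinearMap.inner_apply_eq_of_mem_range {P : E →L[𝕜] E} (hsa : IsSelfAdjoint P)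
    (hP : IsIdempotentElem P) (u : E) {v : E} (hv : v ∈ Set.range P) :
    ⟪P u, v⟫_𝕜 = ⟪u, v⟫_𝕜 := by
  rw [← adjoint_inner_right, hsa.adjoint_eq, apply_eq_self_of_mem_range hP hv]

theorem inner_compress_pow_apply_adjoint_pow_self {P Pc S : E →L[𝕜] E} {e : E}
    (hsa : IsSelfAdjoint P) (hP : IsIdempotentElem P) (hPc : ∀ x, Pc x = ⟪e, x⟫_𝕜 • e) (l : ℕ)
    {d : E} (hd : d ∈ Set.range P) (hdl : (adjoint S ^ l) d ∈ Set.range P) :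
    ⟪P ((S ^ l) ((P ∘L Pc ∘L P) ((adjoint S ^ l) d))), d⟫_𝕜 =
      (‖⟪e, (adjoint S ^ l) d⟫_𝕜‖ : 𝕜) ^ 2 := by
  rw [inner_apply_eq_of_mem_range hsa hP _ hd, inner_pow_apply_left, comp_apply, comp_apply,
    apply_eq_self_of_mem_range hP hdl, inner_apply_eq_of_mem_range hsa hP _ hdl, hPc,
    inner_smul_left, RCLike.conj_mul]

end InnerProductSpace

/-- `H²(𝔻)` is modelled by `H` with the monomials `z^m` as the Hilbert basis `b`. -/
theorem quotient_module_eq_closed_span_of_compressed_shifts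
    {H : Type*} [NormedAddCommGroup H] [InnerProductSpace ℂ H] [CompleteSpace H]
    (b : HilbertBasis ℕ ℂ H)
    (S Pc PQ : H →L[ℂ] H)
    (hS : ∀ m : ℕ, S (b m) = b (m + 1))
    (hPc : ∀ x : H, Pc x = ⟪b 0, x⟫_ℂ • b 0)
    (Q : Submodule ℂ H)
    (hQclosed : IsClosed (Q : Set H))
    (hQinv : ∀ x ∈ Q, ContinuousLinearMap.adjoint S x ∈ Q)
    (hPQsa : IsSelfAdjoint PQ)
    (hPQidem : PQ ∘L PQ = PQ)
    (hPQrange : Set.range PQ = (Q : Set H)) :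
    Q = (Submodule.span ℂ
          {x : H | ∃ (l : ℕ) (y : H), x = PQ ((S ^ l) ((PQ ∘L Pc ∘L PQ) y))}).topologicalClosure := by
  refine Submodule.eq_topologicalClosure_span_of_forall_inner_eq_zero hQclosed ?_
    fun d hd hperp => ?_
  · rintro _ ⟨l, y, rfl⟩
    exact hPQrange ▸ Set.mem_range_self _
  · have hdl (l : ℕ) : (adjoint S ^ l) d ∈ Set.range PQ :=
      hPQrange ▸ Set.MapsTo.pow_apply hQinv l hd
    refine eq_zero_of_forall_inner_adjoint_pow_eq_zero b hS fun l => ?_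
    have h := hperp _ ⟨l, (adjoint S ^ l) d, rfl⟩
    rw [inner_compress_pow_apply_adjoint_pow_self hPQsa hPQidem hPc l (hPQrange ▸ hd) (hdl l)] at h
    simpa using h
end

section
/- Let n > 1 and let S be a closed subspace of H²(𝔻ⁿ). Then S reduces each of M_{z_2}, ..., M_{z_n} (i.e., M_{z_i} P_S = P_S M_{z_i} for 2 ≤ i ≤ n) if and only if S = S_1 ⊗ H²(𝔻^{n-1}) for some closed subspace S_1 of H²(𝔻). -/
/-!
Since `P` is self-adjoint, commuting with every `S j` means commuting with the whole
*-algebra generated by the `S j`. For each multi-index `g` that algebra contains the operator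
`f ↦ (slice g f) ⊗ 1`, namely `E₀ T_g`, where `T_g` (a product of powers of the `S j⋆`)
translates the last variables back by `g` and `E₀ = ∏ⱼ (1 - S j S j⋆)` projects onto the fibre
`h = 0`. Hence `f ∈ 𝒮` forces every slice of `f` into `𝒮₁ = {q | q ⊗ 1 ∈ 𝒮}`, and conversely, if
all slices of `f` lie in `𝒮₁`, then `P f` and `f` have the same slices, so `f = P f ∈ 𝒮`.
For the converse direction, `𝒮₁ ⊗ H²` is invariant under every `S j` and `S j⋆`, and an
orthogonal projection commutes with `T` once its range is invariant under `T` and `T⋆`.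
-/

open ContinuousLinearMap Set
open scoped InnerProductSpace ENNReal

theorem IsIdempotentElem.apply_eq_self_of_mem_range {R M : Type*} [Semiring R]
    [TopologicalSpace M] [AddCommMonoid M] [Module R M] {P : M →L[R] M}
    (hP : IsIdempotentElem P) {y : M} (hy : y ∈ range P) : P y = y := by
  obtain ⟨x, rfl⟩ := hy
  exact DFunLike.congr_fun hP.eq x

theorem Commute.mapsTo_range {R M : Type*} [Semiring R] [TopologicalSpace M] [AddCommMonoid M]
    [Module R M] {P T : M →L[R] M} (h : Commute P T) : MapsTo T (range P) (range P) := by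
  rintro _ ⟨x, rfl⟩
  exact ⟨T x, DFunLike.congr_fun h.eq x⟩

theorem IsIdempotentElem.mul_mul_self_of_mapsTo_range {R M : Type*} [Semiring R]
    [TopologicalSpace M] [AddCommMonoid M] [Module R M] {P T : M →L[R] M}
    (hP : IsIdempotentElem P) (hT : MapsTo T (range P) (range P)) : P * T * P = T * P :=
  ext fun x => hP.apply_eq_self_of_mem_range (hT (mem_range_self x))

theorem IsStarProjection.commute_of_mapsTo_range {𝕜 E : Type*} [RCLike 𝕜] [NormedAddCommGroup E]
    [InnerProductSpace 𝕜 E] [CompleteSpace E] {P T : E →L[𝕜] E} (hP : IsStarProjection P)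
    (hT : MapsTo T (range P) (range P)) (hT' : MapsTo (adjoint T) (range P) (range P)) :
    Commute P T := by
  have h := congrArg Star.star (hP.isIdempotentElem.mul_mul_self_of_mapsTo_range hT')
  simp only [star_mul, hP.isSelfAdjoint.star_eq, star_eq_adjoint, adjoint_adjoint,
    ← mul_assoc] at h
  exact h.symm.trans (hP.isIdempotentElem.mul_mul_self_of_mapsTo_range hT)

theorem IsSelfAdjoint.commute_of_mem_adjoin {R A : Type*} [CommSemiring R] [StarRing R]
    [Semiring A] [StarRing A] [Algebra R A] [StarModule R A] {P : A} (hP : IsSelfAdjoint P)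
    {s : Set A} (hs : ∀ x ∈ s, Commute P x) {y : A} (hy : y ∈ StarAlgebra.adjoin R s) :
    Commute P y := by
  have hle : StarAlgebra.adjoin R s ≤ StarSubalgebra.centralizer R {P} := by
    refine StarAlgebra.adjoin_le fun x hx => ?_
    rw [SetLike.mem_coe, StarSubalgebra.mem_centralizer_iff R]
    rintro _ rfl
    rw [hP.star_eq]
    exact ⟨hs x hx, hs x hx⟩
  exact (((StarSubalgebra.mem_centralizer_iff R).mp (hle hy)) P rfl).1

theorem ContinuousLinearMap.adjoint_mem_adjoin_range {𝕜 E ι : Type*} [RCLike 𝕜]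
    [NormedAddCommGroup E] [InnerProductSpace 𝕜 E] [CompleteSpace E] (S : ι → (E →L[𝕜] E))
    (j : ι) : adjoint (S j) ∈ StarAlgebra.adjoin 𝕜 (range S) := by
  rw [← star_eq_adjoint]
  exact star_mem (StarAlgebra.subset_adjoin 𝕜 _ (mem_range_self j))

noncomputable abbrev L2 (α : Type*) := lp (fun _ : α => ℂ) 2

namespace L2

variable {α β : Type*}

theorem inner_single_one_left [DecidableEq α] (x : α) (f : L2 α) :
    ⟪lp.single 2 x (1 : ℂ), f⟫_ℂ = f x := by
  simp [lp.inner_single_left]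

theorem sum_norm_rpow_slice_le (f : L2 (α × β)) (b : β) (s : Finset α) :
    ∑ a ∈ s, ‖f (a, b)‖ ^ (2 : ℝ≥0∞).toReal ≤ ‖f‖ ^ (2 : ℝ≥0∞).toReal :=
  (Finset.sum_map s (Function.Embedding.sectL α b) fun x => ‖f x‖ ^ (2 : ℝ≥0∞).toReal).ge.trans
    (lp.sum_rpow_le_norm_rpow (by norm_num) f _)

noncomputable def slice (b : β) : L2 (α × β) →L[ℂ] L2 α :=
  LinearMap.mkContinuous
    { toFun f := ⟨fun a => f (a, b), memℓp_gen' (sum_norm_rpow_slice_le f b)⟩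
      map_add' _ _ := rfl
      map_smul' _ _ := rfl }
    1 fun f => by
      rw [one_mul]
      exact lp.norm_le_of_forall_sum_le (by norm_num) (norm_nonneg f) (sum_norm_rpow_slice_le f b)

@[simp]
theorem slice_apply (b : β) (f : L2 (α × β)) (a : α) : slice b f a = f (a, b) := rfl

noncomputable def tensorOne [Zero β] : L2 α →L[ℂ] L2 (α × β) := adjoint (slice 0)

theorem tensorOne_apply [DecidableEq α] [DecidableEq β] [Zero β] (q : L2 α) (a : α) (b : β) :
    tensorOne q (a, b) = if b = 0 then q a else 0 := by
  rw [← inner_single_one_left, tensorOne, adjoint_inner_right]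
  split_ifs with hb
  · have : slice 0 (lp.single 2 (a, b) 1) = lp.single 2 a (1 : ℂ) := by
      ext a'
      simp [hb, Pi.single_apply]
    rw [this, inner_single_one_left]
  · have : slice 0 (lp.single 2 (a, b) (1 : ℂ)) = 0 := by
      ext a'
      simp [Ne.symm hb]
    rw [this, inner_zero_left]

def tensorFull (β : Type*) (K : Submodule ℂ (L2 α)) : Set (L2 (α × β)) :=
  {f | ∀ b, slice b f ∈ K}

theorem setOf_exists_eq_slice (K : Submodule ℂ (L2 α)) :
    {f : L2 (α × β) | ∀ b, ∃ q ∈ K, ∀ a, q a = f (a, b)} = tensorFull β K := by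
  ext f
  refine forall_congr' fun b => ⟨?_, fun hb => ⟨_, hb, fun a => rfl⟩⟩
  rintro ⟨q, hq, hqf⟩
  convert hq
  ext a
  exact (hqf a).symm

end L2

theorem Pi.exists_eq_add_single_one {ι : Type*} [DecidableEq ι] {g : ι → ℕ} {j : ι}
    (hj : g j ≠ 0) : ∃ g' : ι → ℕ, g = g' + Pi.single j 1 := by
  refine ⟨g - Pi.single j 1, funext fun i => ?_⟩
  rcases eq_or_ne i j with rfl | hij
  · simp only [Pi.add_apply, Pi.sub_apply, Pi.single_eq_same]; omega
  · simp [hij]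

variable {α ι : Type*} [DecidableEq α] [Fintype ι] [DecidableEq ι]

def IsCoordShift (S : ι → (L2 (α × (ι → ℕ)) →L[ℂ] L2 (α × (ι → ℕ)))) : Prop :=
  ∀ j a g, S j (lp.single 2 (a, g) 1) = lp.single 2 (a, g + Pi.single j 1) 1

namespace IsCoordShift

variable {S : ι → (L2 (α × (ι → ℕ)) →L[ℂ] L2 (α × (ι → ℕ)))}

theorem adjoint_apply (hS : IsCoordShift S) (j : ι) (f : L2 (α × (ι → ℕ))) (a : α) (g : ι → ℕ) :
    adjoint (S j) f (a, g) = f (a, g + Pi.single j 1) := by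
  rw [← L2.inner_single_one_left, adjoint_inner_right, hS, L2.inner_single_one_left]

theorem adjoint_single_of_eq_zero (hS : IsCoordShift S) {j : ι} (a : α) {g : ι → ℕ}
    (hg : g j = 0) : adjoint (S j) (lp.single 2 (a, g) 1) = 0 := by
  ext ⟨b, k⟩
  rw [hS.adjoint_apply, lp.single_apply, Pi.single_apply, if_neg]
  · rfl
  · intro h
    simpa [hg] using congrFun (congrArg Prod.snd h) j

theorem adjoint_single_add_single (hS : IsCoordShift S) (j : ι) (a : α) (g : ι → ℕ) :
    adjoint (S j) (lp.single 2 (a, g + Pi.single j 1) 1) = lp.single 2 (a, g) 1 := by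
  ext ⟨b, k⟩
  simp only [hS.adjoint_apply, lp.single_apply, Pi.single_apply, Prod.mk.injEq, add_left_inj]

theorem apply_of_eq_zero (hS : IsCoordShift S) (f : L2 (α × (ι → ℕ))) {j : ι} (a : α)
    {g : ι → ℕ} (hg : g j = 0) : S j f (a, g) = 0 := by
  rw [← L2.inner_single_one_left, ← adjoint_inner_left, hS.adjoint_single_of_eq_zero a hg,
    inner_zero_left]

theorem apply_add_single (hS : IsCoordShift S) (f : L2 (α × (ι → ℕ))) (j : ι) (a : α)
    (g : ι → ℕ) : S j f (a, g + Pi.single j 1) = f (a, g) := by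
  rw [← L2.inner_single_one_left, ← adjoint_inner_left, hS.adjoint_single_add_single,
    L2.inner_single_one_left]

theorem adjoint_pow_apply (hS : IsCoordShift S) (j : ι) (n : ℕ) (f : L2 (α × (ι → ℕ))) (a : α)
    (g : ι → ℕ) : (adjoint (S j) ^ n) f (a, g) = f (a, g + Pi.single j n) := by
  induction n generalizing g with
  | zero => simp
  | succ n ih =>
    rw [pow_succ', mul_apply_eq_comp, hS.adjoint_apply, ih, add_assoc, ← Pi.single_add, add_comm 1]

theorem one_sub_mul_adjoint_apply (hS : IsCoordShift S) (j : ι) (f : L2 (α × (ι → ℕ))) (a : α)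
    (g : ι → ℕ) : (1 - S j * adjoint (S j)) f (a, g) = if g j = 0 then f (a, g) else 0 := by
  rw [sub_apply, one_apply_eq_self, mul_apply_eq_comp, lp.coeFn_sub, Pi.sub_apply]
  split_ifs with hg
  · rw [hS.apply_of_eq_zero _ a hg, sub_zero]
  · obtain ⟨g, rfl⟩ := Pi.exists_eq_add_single_one hg
    rw [hS.apply_add_single, hS.adjoint_apply, sub_self]

theorem exists_translation (hS : IsCoordShift S) (g : ι → ℕ) :
    ∃ T ∈ StarAlgebra.adjoin ℂ (range S), ∀ f a h, T f (a, h) = f (a, h + g) := by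
  induction g using Pi.single_induction with
  | zero => exact ⟨1, one_mem _, by simp⟩
  | add g g' ihg ihg' =>
    obtain ⟨T, hT, hTg⟩ := ihg
    obtain ⟨T', hT', hTg'⟩ := ihg'
    exact ⟨T * T', mul_mem hT hT', fun f a h => by rw [mul_apply_eq_comp, hTg, hTg', add_assoc]⟩
  | single j n =>
    exact ⟨adjoint (S j) ^ n, pow_mem (adjoint_mem_adjoin_range S j) n, hS.adjoint_pow_apply j n⟩

theorem exists_proj_forall_eq_zero (hS : IsCoordShift S) (s : Finset ι) :
    ∃ E ∈ StarAlgebra.adjoin ℂ (range S),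
      ∀ f a h, E f (a, h) = if ∀ j ∈ s, h j = 0 then f (a, h) else 0 := by
  induction s using Finset.induction_on with
  | empty => exact ⟨1, one_mem _, by simp⟩
  | insert j s _ ih =>
    obtain ⟨E, hE, hEf⟩ := ih
    refine ⟨(1 - S j * adjoint (S j)) * E,
      mul_mem (sub_mem (one_mem _) (mul_mem (StarAlgebra.subset_adjoin ℂ _ (mem_range_self j))
        (adjoint_mem_adjoin_range S j))) hE, fun f a h => ?_⟩
    rw [mul_apply_eq_comp, hS.one_sub_mul_adjoint_apply, hEf]
    simp only [Finset.forall_mem_insert]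
    split_ifs <;> tauto

open L2

theorem exists_tensorOne_slice (hS : IsCoordShift S) (g : ι → ℕ) :
    ∃ R ∈ StarAlgebra.adjoin ℂ (range S), ∀ f, R f = tensorOne (slice g f) := by
  obtain ⟨T, hT, hTf⟩ := hS.exists_translation g
  obtain ⟨E, hE, hEf⟩ := hS.exists_proj_forall_eq_zero Finset.univ
  refine ⟨E * T, mul_mem hE hT, fun f => ?_⟩
  ext ⟨a, h⟩
  have hzero : (∀ j ∈ Finset.univ, h j = 0) ↔ h = 0 := by simp [funext_iff]
  rw [mul_apply_eq_comp, hEf, if_congr hzero rfl rfl, tensorOne_apply, slice_apply]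
  split_ifs with h0
  · rw [hTf, h0, zero_add]
  · rfl

theorem coe_eq_tensorFull_comap_tensorOne (hS : IsCoordShift S)
    {P : L2 (α × (ι → ℕ)) →L[ℂ] L2 (α × (ι → ℕ))} {𝒮 : Submodule ℂ (L2 (α × (ι → ℕ)))}
    (hP : IsStarProjection P) (hP𝒮 : range P = 𝒮) (hcomm : ∀ j, Commute P (S j)) :
    (𝒮 : Set (L2 (α × (ι → ℕ)))) =
      tensorFull (ι → ℕ) (𝒮.comap (tensorOne (β := ι → ℕ)).toLinearMap) := by
  have hA : ∀ R ∈ StarAlgebra.adjoin ℂ (range S), Commute P R :=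
    fun R => hP.isSelfAdjoint.commute_of_mem_adjoin (forall_mem_range.mpr hcomm)
  ext f
  change f ∈ 𝒮 ↔ ∀ g, tensorOne (slice g f) ∈ 𝒮
  simp only [← SetLike.mem_coe, ← hP𝒮]
  constructor
  · rintro ⟨x, rfl⟩ g
    obtain ⟨R, hR, hRf⟩ := hS.exists_tensorOne_slice g
    exact hRf (P x) ▸ (hA R hR).mapsTo_range (mem_range_self x)
  · intro hf
    refine ⟨f, ?_⟩
    ext ⟨a, g⟩
    obtain ⟨R, hR, hRf⟩ := hS.exists_tensorOne_slice g
    calc P f (a, g) = (tensorOne (slice g (P f)) : L2 (α × (ι → ℕ))) (a, 0) := by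
          simp [tensorOne_apply]
      _ = P (R f) (a, 0) := by rw [← hRf, ← mul_apply_eq_comp, ← (hA R hR).eq, mul_apply_eq_comp]
      _ = (tensorOne (slice g f) : L2 (α × (ι → ℕ))) (a, 0) := by
          rw [hRf, hP.isIdempotentElem.apply_eq_self_of_mem_range (hf g)]
      _ = f (a, g) := by simp [tensorOne_apply]

theorem slice_adjoint (hS : IsCoordShift S) (j : ι) (g : ι → ℕ) (f : L2 (α × (ι → ℕ))) :
    slice g (adjoint (S j) f) = slice (g + Pi.single j 1) f := by
  ext a
  exact hS.adjoint_apply j f a g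

theorem slice_eq_zero (hS : IsCoordShift S) {j : ι} {g : ι → ℕ} (hg : g j = 0)
    (f : L2 (α × (ι → ℕ))) : slice g (S j f) = 0 := by
  ext a
  exact hS.apply_of_eq_zero f a hg

theorem slice_add_single (hS : IsCoordShift S) (j : ι) (g : ι → ℕ) (f : L2 (α × (ι → ℕ))) :
    slice (g + Pi.single j 1) (S j f) = slice g f := by
  ext a
  exact hS.apply_add_single f j a g

theorem mapsTo_tensorFull (hS : IsCoordShift S) (K : Submodule ℂ (L2 α)) (j : ι) :
    MapsTo (S j) (tensorFull (ι → ℕ) K) (tensorFull (ι → ℕ) K) := by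
  intro f hf g
  by_cases hg : g j = 0
  · rw [hS.slice_eq_zero hg]
    exact K.zero_mem
  · obtain ⟨g, rfl⟩ := Pi.exists_eq_add_single_one hg
    rw [hS.slice_add_single]
    exact hf g

theorem mapsTo_adjoint_tensorFull (hS : IsCoordShift S) (K : Submodule ℂ (L2 α)) (j : ι) :
    MapsTo (adjoint (S j)) (tensorFull (ι → ℕ) K) (tensorFull (ι → ℕ) K) := by
  intro f hf g
  rw [hS.slice_adjoint]
  exact hf _

end IsCoordShift

theorem reducing_iff_tensor_with_full_space_general
    {m : ℕ}
    (S : Fin m → (lp (fun _ : ℕ × (Fin m → ℕ) => ℂ) 2 →L[ℂ] lp (fun _ : ℕ × (Fin m → ℕ) => ℂ) 2))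
    (hS : ∀ (j : Fin m) (a : ℕ) (g : Fin m → ℕ),
      S j (lp.single 2 (a, g) (1 : ℂ)) = lp.single 2 (a, g + Pi.single j 1) (1 : ℂ))
    (𝒮 : Submodule ℂ (lp (fun _ : ℕ × (Fin m → ℕ) => ℂ) 2))
    (h𝒮 : IsClosed (𝒮 : Set (lp (fun _ : ℕ × (Fin m → ℕ) => ℂ) 2)))
    (P : lp (fun _ : ℕ × (Fin m → ℕ) => ℂ) 2 →L[ℂ] lp (fun _ : ℕ × (Fin m → ℕ) => ℂ) 2)
    (hPsa : IsSelfAdjoint P)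
    (hPidem : P ∘L P = P)
    (hPrange : Set.range P = (𝒮 : Set (lp (fun _ : ℕ × (Fin m → ℕ) => ℂ) 2))) :
    (∀ j, S j ∘L P = P ∘L S j) ↔
      ∃ 𝒮₁ : Submodule ℂ (lp (fun _ : ℕ => ℂ) 2),
        IsClosed (𝒮₁ : Set (lp (fun _ : ℕ => ℂ) 2)) ∧
        (𝒮 : Set (lp (fun _ : ℕ × (Fin m → ℕ) => ℂ) 2)) =
          {f : lp (fun _ : ℕ × (Fin m → ℕ) => ℂ) 2 | ∀ g : Fin m → ℕ, ∃ q ∈ 𝒮₁,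
            ∀ a : ℕ, (q : ∀ _ : ℕ, ℂ) a = (f : ∀ _ : ℕ × (Fin m → ℕ), ℂ) (a, g)} := by
  have hS' : IsCoordShift S := hS
  have hP : IsStarProjection P := ⟨hPidem, hPsa⟩
  simp_rw [L2.setOf_exists_eq_slice]
  constructor
  · intro h
    refine ⟨_, ?_, hS'.coe_eq_tensorFull_comap_tensorOne hP hPrange fun j => (h j).symm⟩
    exact h𝒮.preimage L2.tensorOne.continuous
  · rintro ⟨𝒮₁, -, h𝒮₁⟩ j
    rw [← hPrange] at h𝒮₁
    refine (hP.commute_of_mapsTo_range ?_ ?_).eq.symm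
    · rw [h𝒮₁]
      exact hS'.mapsTo_tensorFull 𝒮₁ j
    · rw [h𝒮₁]
      exact hS'.mapsTo_adjoint_tensorFull 𝒮₁ j

/-- Realize `H²(𝔻ⁿ)` (`n = m + 1 > 1`) as
`H²(𝔻) ⊗ H²(𝔻^m) ≅ ℓ²(ℕ × ℕ^m)`, with coordinate shifts `S j` (`2 ≤ j ≤ n`) acting in the last
`m` variables on the canonical basis `e_{(a,g)}` by `S j e_{(a,g)} = e_{(a, g + δ_j)}`.  A closed
subspace `𝒮`, with orthogonal projection `P` (self-adjoint idempotent with range `𝒮`), reduces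
each of `M_{z_2}, …, M_{z_n}` (i.e. `S j P = P S j` for all `j`) if and only if
`𝒮 = 𝒮₁ ⊗ H²(𝔻^m)` for some closed subspace `𝒮₁ ⊆ H²(𝔻) ≅ ℓ²(ℕ)`; the tensor product is the
subspace of those `f` all of whose first-variable slices `a ↦ f (a, g)` lie in `𝒮₁`. -/
theorem reducing_iff_tensor_with_full_space
    {m : ℕ} (hm : 1 ≤ m)
    (S : Fin m → (lp (fun _ : ℕ × (Fin m → ℕ) => ℂ) 2 →L[ℂ] lp (fun _ : ℕ × (Fin m → ℕ) => ℂ) 2))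
    (hS : ∀ (j : Fin m) (a : ℕ) (g : Fin m → ℕ),
      S j (lp.single 2 (a, g) (1 : ℂ)) = lp.single 2 (a, g + Pi.single j 1) (1 : ℂ))
    (𝒮 : Submodule ℂ (lp (fun _ : ℕ × (Fin m → ℕ) => ℂ) 2))
    (h𝒮 : IsClosed (𝒮 : Set (lp (fun _ : ℕ × (Fin m → ℕ) => ℂ) 2)))
    (P : lp (fun _ : ℕ × (Fin m → ℕ) => ℂ) 2 →L[ℂ] lp (fun _ : ℕ × (Fin m → ℕ) => ℂ) 2)
    (hPsa : IsSelfAdjoint P)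
    (hPidem : P ∘L P = P)
    (hPrange : Set.range P = (𝒮 : Set (lp (fun _ : ℕ × (Fin m → ℕ) => ℂ) 2))) :
    (∀ j, S j ∘L P = P ∘L S j) ↔
      ∃ 𝒮₁ : Submodule ℂ (lp (fun _ : ℕ => ℂ) 2),
        IsClosed (𝒮₁ : Set (lp (fun _ : ℕ => ℂ) 2)) ∧
        (𝒮 : Set (lp (fun _ : ℕ × (Fin m → ℕ) => ℂ) 2)) =
          {f : lp (fun _ : ℕ × (Fin m → ℕ) => ℂ) 2 | ∀ g : Fin m → ℕ, ∃ q ∈ 𝒮₁,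
            ∀ a : ℕ, (q : ∀ _ : ℕ, ℂ) a = (f : ∀ _ : ℕ × (Fin m → ℕ), ℂ) (a, g)} :=
  reducing_iff_tensor_with_full_space_general S hS 𝒮 h𝒮 P hPsa hPidem hPrange
end

section
/- Let Q_1 be a quotient module of H²(𝔻) and let Q = Q_1 ⊗ H²(𝔻^{n-1}) ⊆ H²(𝔻ⁿ). A closed subspace M of Q is reducing for the compression P_Q M_{z_1}|_Q if and only if M = Q_1 ⊗ E for some closed subspace E of H²(𝔻^{n-1}). -/
/-!
Identify `ℓ²(ℕ × ℕ^m)` with `ℓ²(ℕ) ⊗ ℓ²(ℕ^m)`. Then `M_{z₁} = s ⊗ 1`, `P_Q = P_{Q₁} ⊗ 1`, the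
compression `A = P_Q M_{z₁} P_Q` is `(P_{Q₁} s P_{Q₁}) ⊗ 1`, and `M` is reducing iff it is invariant
under `A` and `A*`.

An operator `T ⊗ 1` maps `ℓ²(ℕ) ⊗ E` into itself when `E` is closed, because
`⟪y, (T f)(i, ·)⟫ = ⟪T* (δᵢ ⊗ y), f⟫ = 0` for `y ⊥ E`; hence `Q₁ ⊗ E` is reducing.

Conversely, `A*` agrees with `M_{z₁}*` on `Q` since `Q₁` is `s*`-invariant, and
`f - A M_{z₁}* f = w ⊗ f(0, ·)` with `w = P_{Q₁} δ₀`. Applied to `(M_{z₁}*)ᵏ f` this puts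
`w ⊗ f(k, ·)` in `M` for every `f ∈ M`, so take `E = {e | w ⊗ e ∈ M}`. Since `Q₁ᗮ` is
`s`-invariant, `A (P_{Q₁} δⱼ ⊗ e) = P_{Q₁} δⱼ₊₁ ⊗ e`, so `P_{Q₁} δₖ ⊗ e ∈ M` for `e ∈ E`, and
every `f ∈ Q₁ ⊗ E` is the convergent sum `∑ₖ P_{Q₁} δₖ ⊗ f(k, ·)` of such vectors.
-/

open ContinuousLinearMap

open scoped InnerProductSpace lp

open Module.End (invtSubmodule)

noncomputable section

namespace Submodule

variable {𝕜 E : Type*} [RCLike 𝕜] [NormedAddCommGroup E] [InnerProductSpace 𝕜 E]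

def compression (K : Submodule 𝕜 E) [K.HasOrthogonalProjection] (T : E →L[𝕜] E) : E →L[𝕜] E :=
  K.starProjection ∘L T ∘L K.starProjection

theorem compression_apply (K : Submodule 𝕜 E) [K.HasOrthogonalProjection] (T : E →L[𝕜] E)
    (x : E) : K.compression T x = K.starProjection (T (K.starProjection x)) :=
  rfl

theorem compression_apply_mem (K : Submodule 𝕜 E) [K.HasOrthogonalProjection] (T : E →L[𝕜] E)
    (x : E) : K.compression T x ∈ K :=
  K.starProjection_apply_mem _

variable [CompleteSpace E]

theorem exists_eq_starProjection_of_range {p : E →L[𝕜] E} {K : Submodule 𝕜 E}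
    (hsa : IsSelfAdjoint p) (hidem : p ∘L p = p) (hrange : Set.range p = K) :
    ∃ _ : K.HasOrthogonalProjection, p = K.starProjection := by
  obtain ⟨_, hp⟩ := isStarProjection_iff_eq_starProjection_range.mp ⟨hidem, hsa⟩
  obtain rfl : p.range = K := SetLike.coe_injective hrange
  exact ⟨_, hp⟩

theorem commute_starProjection_iff (K : Submodule 𝕜 E) [K.HasOrthogonalProjection]
    (T : E →L[𝕜] E) :
    Commute K.starProjection T ↔
      K ∈ invtSubmodule T.toLinearMap ∧ K ∈ invtSubmodule (adjoint T).toLinearMap := by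
  rw [K.isIdempotentElem_starProjection.commute_iff, range_starProjection, ker_starProjection,
    ContinuousLinearMap.mem_invtSubmodule_adjoint_iff]

theorem adjoint_compression (K : Submodule 𝕜 E) [K.HasOrthogonalProjection] (T : E →L[𝕜] E) :
    adjoint (K.compression T) = K.compression (adjoint T) := by
  rw [compression, compression, adjoint_comp, adjoint_comp,
    (isSelfAdjoint_starProjection K).adjoint_eq, comp_assoc]

theorem compression_eq_starProjection_comp (K : Submodule 𝕜 E) [K.HasOrthogonalProjection]
    {T : E →L[𝕜] E} (hK : K ∈ invtSubmodule (adjoint T).toLinearMap) :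
    K.compression T = K.starProjection ∘L T := by
  rw [compression, ← K.isIdempotentElem_starProjection.ker_mem_invtSubmodule_iff,
    ker_starProjection, ← ContinuousLinearMap.mem_invtSubmodule_adjoint_iff]
  exact hK

end Submodule

namespace lp

variable {𝕜 ι κ : Type*} [RCLike 𝕜]

theorem inner_single_one_left [DecidableEq ι] (i : ι) (f : ℓ²(ι, 𝕜)) :
    ⟪lp.single 2 i (1 : 𝕜), f⟫_𝕜 = f i := by
  simp [inner_single_left]

theorem ext_continuousLinearMap_single [DecidableEq ι] {F : Type*} [NormedAddCommGroup F]
    [NormedSpace 𝕜 F] {S T : ℓ²(ι, 𝕜) →L[𝕜] F}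
    (h : ∀ i, S (lp.single 2 i 1) = T (lp.single 2 i 1)) : S = T :=
  lp.ext_continuousLinearMap ENNReal.ofNat_ne_top fun i => ContinuousLinearMap.ext_ring (h i)

theorem memℓp_mul_prod (q : ℓ²(ι, 𝕜)) (e : ℓ²(κ, 𝕜)) :
    Memℓp (fun p : ι × κ => q p.1 * e p.2) 2 := by
  have hq := (lp.memℓp q).summable (p := 2) (by norm_num)
  have he := (lp.memℓp e).summable (p := 2) (by norm_num)
  refine memℓp_gen ((hq.mul_of_nonneg he (fun _ => by positivity) fun _ => by positivity).congr
    fun p => ?_)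
  rw [norm_mul, Real.mul_rpow (norm_nonneg _) (norm_nonneg _)]

theorem norm_mk_mul_prod (q : ℓ²(ι, 𝕜)) (e : ℓ²(κ, 𝕜)) :
    ‖(⟨_, memℓp_mul_prod q e⟩ : ℓ²(ι × κ, 𝕜))‖ = ‖q‖ * ‖e‖ := by
  have h2 : 0 < (2 : ENNReal).toReal := by norm_num
  have h := (hasSum_norm h2 q).mul_eq (hasSum_norm h2 e)
    ((hasSum_norm h2 ⟨_, memℓp_mul_prod q e⟩).congr_fun fun p => by
      simp only [norm_mul, Real.mul_rpow (norm_nonneg _) (norm_nonneg _)])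
  rw [← Real.mul_rpow (norm_nonneg _) (norm_nonneg _)] at h
  exact ((Real.rpow_left_injOn h2.ne').eq_iff (Set.mem_Ici.mpr (by positivity))
    (Set.mem_Ici.mpr (by positivity))).mp h |>.symm

variable (𝕜 ι κ) in
def tmul : ℓ²(ι, 𝕜) →L[𝕜] ℓ²(κ, 𝕜) →L[𝕜] ℓ²(ι × κ, 𝕜) :=
  LinearMap.mkContinuous₂
    (LinearMap.mk₂ 𝕜 (fun q e => ⟨_, memℓp_mul_prod q e⟩)
      (fun _ _ _ => lp.ext <| funext fun _ => add_mul _ _ _)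
      (fun _ _ _ => lp.ext <| funext fun _ => mul_assoc _ _ _)
      (fun _ _ _ => lp.ext <| funext fun _ => mul_add _ _ _)
      (fun _ _ _ => lp.ext <| funext fun _ => mul_left_comm _ _ _)) 1
    fun q e => by simp [norm_mk_mul_prod]

@[simp]
theorem tmul_apply (q : ℓ²(ι, 𝕜)) (e : ℓ²(κ, 𝕜)) (p : ι × κ) :
    tmul 𝕜 ι κ q e p = q p.1 * e p.2 := rfl

theorem inner_tmul_tmul (q q' : ℓ²(ι, 𝕜)) (e e' : ℓ²(κ, 𝕜)) :
    ⟪tmul 𝕜 ι κ q e, tmul 𝕜 ι κ q' e'⟫_𝕜 = ⟪q, q'⟫_𝕜 * ⟪e, e'⟫_𝕜 := by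
  have h : HasSum (fun p : ι × κ => ⟪q p.1, q' p.1⟫_𝕜 * ⟪e p.2, e' p.2⟫_𝕜)
      ⟪tmul 𝕜 ι κ q e, tmul 𝕜 ι κ q' e'⟫_𝕜 := by
    convert hasSum_inner (𝕜 := 𝕜) (tmul 𝕜 ι κ q e) (tmul 𝕜 ι κ q' e') using 2 with p
    simp only [tmul_apply, RCLike.inner_apply, map_mul]
    ring
  exact ((hasSum_inner (𝕜 := 𝕜) q q').mul_eq (hasSum_inner (𝕜 := 𝕜) e e') h).symm

theorem tmul_single_single [DecidableEq ι] [DecidableEq κ] (i : ι) (k : κ) (a b : 𝕜) :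
    tmul 𝕜 ι κ (lp.single 2 i a) (lp.single 2 k b) = lp.single 2 (i, k) (a * b) := by
  ext ⟨i', k'⟩
  by_cases hi : i' = i <;> by_cases hk : k' = k <;> simp [lp.single_apply, hi, hk]

section column

variable [DecidableEq κ]

-- Defined as an adjoint so that boundedness comes for free.
variable (𝕜 ι) in
def column (k : κ) : ℓ²(ι × κ, 𝕜) →L[𝕜] ℓ²(ι, 𝕜) :=
  adjoint ((tmul 𝕜 ι κ).flip (lp.single 2 k 1))

@[simp]
theorem column_apply (k : κ) (f : ℓ²(ι × κ, 𝕜)) (i : ι) : column 𝕜 ι k f i = f (i, k) := by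
  classical
  rw [← inner_single_one_left, column, adjoint_inner_right, flip_apply, tmul_single_single,
    one_mul, inner_single_one_left]

theorem ext_column {f g : ℓ²(ι × κ, 𝕜)} (h : ∀ k, column 𝕜 ι k f = column 𝕜 ι k g) : f = g := by
  ext ⟨i, k⟩
  simpa using congr($(h k) i)

theorem column_tmul (k : κ) (q : ℓ²(ι, 𝕜)) (e : ℓ²(κ, 𝕜)) :
    column 𝕜 ι k (tmul 𝕜 ι κ q e) = e k • q := by
  ext i
  simp [mul_comm]

-- This is `V ⊗ ℓ²(κ)`; likewise `rowSubmodule ι E` below is `ℓ²(ι) ⊗ E`, and for closed `V`, `E`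
-- the tensor product `V ⊗ E` is the intersection of the two.
variable (κ) in
def columnSubmodule (V : Submodule 𝕜 ℓ²(ι, 𝕜)) : Submodule 𝕜 ℓ²(ι × κ, 𝕜) :=
  ⨅ k, V.comap (column 𝕜 ι k).toLinearMap

theorem mem_columnSubmodule {V : Submodule 𝕜 ℓ²(ι, 𝕜)} {f : ℓ²(ι × κ, 𝕜)} :
    f ∈ columnSubmodule κ V ↔ ∀ k, column 𝕜 ι k f ∈ V := by
  simp [columnSubmodule]

theorem exists_mem_forall_eq_iff_column_mem {V : Submodule 𝕜 ℓ²(ι, 𝕜)} {f : ℓ²(ι × κ, 𝕜)}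
    {k : κ} : (∃ q ∈ V, ∀ i, q i = f (i, k)) ↔ column 𝕜 ι k f ∈ V :=
  ⟨fun ⟨q, hq, h⟩ => by rwa [show column 𝕜 ι k f = q by ext i; simp [h]],
    fun h => ⟨_, h, fun i => column_apply k f i⟩⟩

-- `T = T₀ ⊗ 1` under `ℓ²(ι × κ) ≅ ℓ²(ι) ⊗ ℓ²(κ)`.
def IsAmpliation (T : ℓ²(ι × κ, 𝕜) →L[𝕜] ℓ²(ι × κ, 𝕜)) (T₀ : ℓ²(ι, 𝕜) →L[𝕜] ℓ²(ι, 𝕜)) : Prop :=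
  ∀ k, column 𝕜 ι k ∘L T = T₀ ∘L column 𝕜 ι k

namespace IsAmpliation

variable {T S : ℓ²(ι × κ, 𝕜) →L[𝕜] ℓ²(ι × κ, 𝕜)} {T₀ S₀ : ℓ²(ι, 𝕜) →L[𝕜] ℓ²(ι, 𝕜)}

theorem column_apply (hT : IsAmpliation T T₀) (k : κ) (f : ℓ²(ι × κ, 𝕜)) :
    column 𝕜 ι k (T f) = T₀ (column 𝕜 ι k f) :=
  congr($(hT k) f)

theorem comp (hT : IsAmpliation T T₀) (hS : IsAmpliation S S₀) :
    IsAmpliation (T ∘L S) (T₀ ∘L S₀) := fun k => by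
  rw [← comp_assoc, hT k, comp_assoc, hS k, comp_assoc]

theorem apply_tmul (hT : IsAmpliation T T₀) (q : ℓ²(ι, 𝕜)) (e : ℓ²(κ, 𝕜)) :
    T (tmul 𝕜 ι κ q e) = tmul 𝕜 ι κ (T₀ q) e :=
  ext_column fun k => by rw [hT.column_apply, column_tmul, column_tmul, map_smul]

protected theorem adjoint (hT : IsAmpliation T T₀) : IsAmpliation (adjoint T) (adjoint T₀) :=
  fun k => by
    have h : T ∘L (tmul 𝕜 ι κ).flip (lp.single 2 k 1) =
        (tmul 𝕜 ι κ).flip (lp.single 2 k 1) ∘L T₀ :=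
      ContinuousLinearMap.ext fun q => hT.apply_tmul q _
    rw [column, ← adjoint_comp, ← adjoint_comp, h]

theorem columnSubmodule_mem_invtSubmodule (hT : IsAmpliation T T₀) {V : Submodule 𝕜 ℓ²(ι, 𝕜)}
    (hV : V ∈ invtSubmodule T₀.toLinearMap) :
    columnSubmodule κ V ∈ invtSubmodule T.toLinearMap := fun f hf =>
  mem_columnSubmodule.mpr fun k => by
    simpa [hT.column_apply] using hV (mem_columnSubmodule.mp hf k)

end IsAmpliation

theorem isAmpliation_starProjection (V : Submodule 𝕜 ℓ²(ι, 𝕜)) [V.HasOrthogonalProjection]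
    [(columnSubmodule κ V).HasOrthogonalProjection] :
    IsAmpliation (columnSubmodule κ V).starProjection V.starProjection := fun k => by
  ext1 f
  rw [comp_apply, comp_apply]
  refine (Submodule.eq_starProjection_of_mem_of_inner_eq_zero
    (mem_columnSubmodule.mp (Submodule.starProjection_apply_mem _ f) k) fun u hu => ?_).symm
  have hu' : tmul 𝕜 ι κ u (lp.single 2 k 1) ∈ columnSubmodule κ V :=
    mem_columnSubmodule.mpr fun k' => by rw [column_tmul]; exact V.smul_mem _ hu
  rw [inner_eq_zero_symm, ← map_sub, column, adjoint_inner_right, flip_apply]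
  exact Submodule.inner_right_of_mem_orthogonal hu'
    (Submodule.sub_starProjection_mem_orthogonal f)

theorem IsAmpliation.compression {T : ℓ²(ι × κ, 𝕜) →L[𝕜] ℓ²(ι × κ, 𝕜)}
    {T₀ : ℓ²(ι, 𝕜) →L[𝕜] ℓ²(ι, 𝕜)} (hT : IsAmpliation T T₀) (V : Submodule 𝕜 ℓ²(ι, 𝕜))
    [V.HasOrthogonalProjection] [(columnSubmodule κ V).HasOrthogonalProjection] :
    IsAmpliation ((columnSubmodule κ V).compression T) (V.compression T₀) :=
  (isAmpliation_starProjection V).comp (hT.comp (isAmpliation_starProjection V))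

theorem IsAmpliation.adjoint_compression_apply_of_mem {T : ℓ²(ι × κ, 𝕜) →L[𝕜] ℓ²(ι × κ, 𝕜)}
    {T₀ : ℓ²(ι, 𝕜) →L[𝕜] ℓ²(ι, 𝕜)} (hT : IsAmpliation T T₀) {V : Submodule 𝕜 ℓ²(ι, 𝕜)}
    [(columnSubmodule κ V).HasOrthogonalProjection]
    (hV : V ∈ invtSubmodule (adjoint T₀).toLinearMap) {f : ℓ²(ι × κ, 𝕜)}
    (hf : f ∈ columnSubmodule κ V) :
    adjoint ((columnSubmodule κ V).compression T) f = adjoint T f := by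
  have hTf : adjoint T f ∈ columnSubmodule κ V :=
    hT.adjoint.columnSubmodule_mem_invtSubmodule hV hf
  rw [Submodule.adjoint_compression, Submodule.compression_apply,
    Submodule.starProjection_eq_self_iff.mpr hf, Submodule.starProjection_eq_self_iff.mpr hTf]

theorem isAmpliation_of_apply_single [DecidableEq ι] {T : ℓ²(ι × κ, 𝕜) →L[𝕜] ℓ²(ι × κ, 𝕜)}
    {T₀ : ℓ²(ι, 𝕜) →L[𝕜] ℓ²(ι, 𝕜)}
    (h : ∀ i k, T (lp.single 2 (i, k) 1) = tmul 𝕜 ι κ (T₀ (lp.single 2 i 1)) (lp.single 2 k 1)) :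
    IsAmpliation T T₀ := fun k => ext_continuousLinearMap_single fun ⟨i, k'⟩ => by
  have hsingle := tmul_single_single (𝕜 := 𝕜) i k' 1 1
  rw [one_mul] at hsingle
  rw [comp_apply, comp_apply, h, ← hsingle, column_tmul, column_tmul, map_smul]

end column

section row

variable [DecidableEq ι]

variable (𝕜 κ) in
def row (i : ι) : ℓ²(ι × κ, 𝕜) →L[𝕜] ℓ²(κ, 𝕜) :=
  adjoint (tmul 𝕜 ι κ (lp.single 2 i 1))

@[simp]
theorem row_apply (i : ι) (f : ℓ²(ι × κ, 𝕜)) (k : κ) : row 𝕜 κ i f k = f (i, k) := by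
  classical
  rw [← inner_single_one_left, row, adjoint_inner_right, tmul_single_single,
    one_mul, inner_single_one_left]

theorem hasSum_tmul_single_row (f : ℓ²(ι × κ, 𝕜)) :
    HasSum (fun i => tmul 𝕜 ι κ (lp.single 2 i 1) (row 𝕜 κ i f)) f := by
  classical
  refine (lp.hasSum_single ENNReal.ofNat_ne_top f).prod_fiberwise fun i => ?_
  convert (tmul 𝕜 ι κ (lp.single 2 i 1)).hasSum
    (lp.hasSum_single ENNReal.ofNat_ne_top (row 𝕜 κ i f)) using 2 with k
  rw [tmul_single_single, one_mul, row_apply]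

theorem inner_tmul_eq_zero_of_forall_inner_row_eq_zero (q : ℓ²(ι, 𝕜)) {y : ℓ²(κ, 𝕜)}
    {f : ℓ²(ι × κ, 𝕜)} (h : ∀ i, ⟪y, row 𝕜 κ i f⟫_𝕜 = 0) : ⟪tmul 𝕜 ι κ q y, f⟫_𝕜 = 0 := by
  refine ((innerSL 𝕜 (tmul 𝕜 ι κ q y)).hasSum (hasSum_tmul_single_row f)).unique ?_
  simp [inner_tmul_tmul, h, hasSum_zero]

variable (ι) in
def rowSubmodule (E : Submodule 𝕜 ℓ²(κ, 𝕜)) : Submodule 𝕜 ℓ²(ι × κ, 𝕜) :=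
  ⨅ i, E.comap (row 𝕜 κ i).toLinearMap

theorem mem_rowSubmodule {E : Submodule 𝕜 ℓ²(κ, 𝕜)} {f : ℓ²(ι × κ, 𝕜)} :
    f ∈ rowSubmodule ι E ↔ ∀ i, row 𝕜 κ i f ∈ E := by
  simp [rowSubmodule]

theorem exists_mem_forall_eq_iff_row_mem {E : Submodule 𝕜 ℓ²(κ, 𝕜)} {f : ℓ²(ι × κ, 𝕜)}
    {i : ι} : (∃ e ∈ E, ∀ k, e k = f (i, k)) ↔ row 𝕜 κ i f ∈ E :=
  ⟨fun ⟨e, he, h⟩ => by rwa [show row 𝕜 κ i f = e by ext k; simp [h]],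
    fun h => ⟨_, h, fun k => row_apply i f k⟩⟩

theorem IsAmpliation.rowSubmodule_mem_invtSubmodule [DecidableEq κ]
    {T : ℓ²(ι × κ, 𝕜) →L[𝕜] ℓ²(ι × κ, 𝕜)} {T₀ : ℓ²(ι, 𝕜) →L[𝕜] ℓ²(ι, 𝕜)}
    (hT : IsAmpliation T T₀) {E : Submodule 𝕜 ℓ²(κ, 𝕜)} (hE : IsClosed (E : Set ℓ²(κ, 𝕜))) :
    rowSubmodule ι E ∈ invtSubmodule T.toLinearMap := fun f hf => by
  refine mem_rowSubmodule.mpr fun i => ?_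
  rw [← hE.submodule_topologicalClosure_eq, ← Submodule.orthogonal_orthogonal_eq_closure]
  intro y hy
  rw [row, adjoint_inner_right, coe_coe, ← adjoint_inner_left, hT.adjoint.apply_tmul]
  exact inner_tmul_eq_zero_of_forall_inner_row_eq_zero _ fun i' =>
    Submodule.inner_left_of_mem_orthogonal (mem_rowSubmodule.mp hf i') hy

theorem IsAmpliation.inf_rowSubmodule_mem_invtSubmodule_compression [DecidableEq κ]
    {T : ℓ²(ι × κ, 𝕜) →L[𝕜] ℓ²(ι × κ, 𝕜)} {T₀ : ℓ²(ι, 𝕜) →L[𝕜] ℓ²(ι, 𝕜)}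
    (hT : IsAmpliation T T₀) (V : Submodule 𝕜 ℓ²(ι, 𝕜)) [V.HasOrthogonalProjection]
    [(columnSubmodule κ V).HasOrthogonalProjection] {E : Submodule 𝕜 ℓ²(κ, 𝕜)}
    (hE : IsClosed (E : Set ℓ²(κ, 𝕜))) :
    columnSubmodule κ V ⊓ rowSubmodule ι E ∈
      invtSubmodule ((columnSubmodule κ V).compression T).toLinearMap :=
  fun _ hf => ⟨Submodule.compression_apply_mem _ _ _,
    (hT.compression V).rowSubmodule_mem_invtSubmodule hE hf.2⟩

end row

section shift

variable {s : ℓ²(ℕ, 𝕜) →L[𝕜] ℓ²(ℕ, 𝕜)} (hs : ∀ a, s (lp.single 2 a 1) = lp.single 2 (a + 1) 1)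
include hs

theorem adjoint_apply_of_shift (x : ℓ²(ℕ, 𝕜)) (b : ℕ) : adjoint s x b = x (b + 1) := by
  rw [← inner_single_one_left, adjoint_inner_right, hs, inner_single_one_left]

theorem apply_zero_of_shift (x : ℓ²(ℕ, 𝕜)) : s x 0 = 0 := by
  have h : adjoint s (lp.single 2 0 1) = 0 := by
    ext b
    simp [adjoint_apply_of_shift hs, lp.single_apply]
  rw [← inner_single_one_left, ← adjoint_inner_left, h, inner_zero_left]

theorem apply_succ_of_shift (x : ℓ²(ℕ, 𝕜)) (b : ℕ) : s x (b + 1) = x b := by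
  have h : adjoint s (lp.single 2 (b + 1) 1) = lp.single 2 b 1 := by
    ext c
    simp [adjoint_apply_of_shift hs, lp.single_apply, Pi.single_apply]
  rw [← inner_single_one_left, ← adjoint_inner_left, h, inner_single_one_left]

theorem apply_adjoint_of_shift (x : ℓ²(ℕ, 𝕜)) :
    s (adjoint s x) = x - x 0 • lp.single 2 0 1 := by
  ext (_ | b) <;> simp only [lp.coeFn_sub, lp.coeFn_smul, Pi.sub_apply, Pi.smul_apply]
  · simp [apply_zero_of_shift hs, lp.single_apply]
  · simp [apply_succ_of_shift hs, adjoint_apply_of_shift hs, lp.single_apply]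

variable [DecidableEq κ] {S : ℓ²(ℕ × κ, 𝕜) →L[𝕜] ℓ²(ℕ × κ, 𝕜)} (hS : IsAmpliation S s)
include hS

theorem row_adjoint_of_isAmpliation_shift (i : ℕ) (f : ℓ²(ℕ × κ, 𝕜)) :
    row 𝕜 κ i (adjoint S f) = row 𝕜 κ (i + 1) f := by
  ext k
  rw [row_apply, ← column_apply, hS.adjoint.column_apply, adjoint_apply_of_shift hs,
    column_apply, row_apply]

theorem apply_adjoint_of_isAmpliation_shift (f : ℓ²(ℕ × κ, 𝕜)) :
    S (adjoint S f) = f - tmul 𝕜 ℕ κ (lp.single 2 0 1) (row 𝕜 κ 0 f) :=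
  ext_column fun k => by
    rw [hS.column_apply, hS.adjoint.column_apply, apply_adjoint_of_shift hs, map_sub,
      column_tmul]
    simp

variable {V : Submodule 𝕜 ℓ²(ℕ, 𝕜)} [V.HasOrthogonalProjection]
  [(columnSubmodule κ V).HasOrthogonalProjection] (hV : V ∈ invtSubmodule (adjoint s).toLinearMap)
include hV

theorem compression_apply_adjoint_of_mem {f : ℓ²(ℕ × κ, 𝕜)} (hf : f ∈ columnSubmodule κ V) :
    (columnSubmodule κ V).compression S (adjoint S f) =
      f - tmul 𝕜 ℕ κ (V.starProjection (lp.single 2 0 1)) (row 𝕜 κ 0 f) := by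
  have hSf : adjoint S f ∈ columnSubmodule κ V :=
    hS.adjoint.columnSubmodule_mem_invtSubmodule hV hf
  rw [Submodule.compression_apply, Submodule.starProjection_eq_self_iff.mpr hSf,
    apply_adjoint_of_isAmpliation_shift hs hS, map_sub, Submodule.starProjection_eq_self_iff.mpr hf,
    (isAmpliation_starProjection V).apply_tmul]

theorem compression_apply_tmul_starProjection_single (j : ℕ) (e : ℓ²(κ, 𝕜)) :
    (columnSubmodule κ V).compression S (tmul 𝕜 ℕ κ (V.starProjection (lp.single 2 j 1)) e) =
      tmul 𝕜 ℕ κ (V.starProjection (lp.single 2 (j + 1) 1)) e := by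
  rw [(hS.compression V).apply_tmul, V.compression_apply,
    Submodule.starProjection_eq_self_iff.mpr (V.starProjection_apply_mem _), ← V.compression_apply,
    V.compression_eq_starProjection_comp hV, comp_apply, hs]

theorem eq_columnSubmodule_inf_rowSubmodule_of_reducing {M : Submodule 𝕜 ℓ²(ℕ × κ, 𝕜)}
    (hM : IsClosed (M : Set ℓ²(ℕ × κ, 𝕜))) (hMV : M ≤ columnSubmodule κ V)
    (hA : M ∈ invtSubmodule ((columnSubmodule κ V).compression S).toLinearMap)
    (hA' : M ∈ invtSubmodule (adjoint ((columnSubmodule κ V).compression S)).toLinearMap) :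
    M = columnSubmodule κ V ⊓ rowSubmodule ℕ
      (M.comap (tmul 𝕜 ℕ κ (V.starProjection (lp.single 2 0 1))).toLinearMap) := by
  set w := V.starProjection (lp.single 2 0 1)
  have hMS : ∀ f ∈ M, adjoint S f ∈ M := fun f hf =>
    hS.adjoint_compression_apply_of_mem hV (hMV hf) ▸ hA' hf
  have hrow : ∀ k, ∀ f ∈ M, tmul 𝕜 ℕ κ w (row 𝕜 κ k f) ∈ M := by
    intro k
    induction k with
    | zero =>
      intro f hf
      rw [← sub_sub_cancel f (tmul 𝕜 ℕ κ w _), ← compression_apply_adjoint_of_mem hs hS hV (hMV hf)]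
      exact M.sub_mem hf (hA (hMS f hf))
    | succ k ih =>
      intro f hf
      rw [← row_adjoint_of_isAmpliation_shift hs hS]
      exact ih _ (hMS f hf)
  have hcol : ∀ j e, tmul 𝕜 ℕ κ w e ∈ M →
      tmul 𝕜 ℕ κ (V.starProjection (lp.single 2 j 1)) e ∈ M := by
    intro j e he
    induction j with
    | zero => exact he
    | succ j ih =>
      rw [← compression_apply_tmul_starProjection_single hs hS hV]
      exact hA ih
  refine le_antisymm (fun f hf => ⟨hMV hf, mem_rowSubmodule.mpr fun k => hrow k f hf⟩)
    fun f hf => ?_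
  have hsum := (columnSubmodule κ V).starProjection.hasSum (hasSum_tmul_single_row f)
  rw [Submodule.starProjection_eq_self_iff.mpr hf.1] at hsum
  refine hM.mem_of_tendsto hsum (Filter.Eventually.of_forall fun _ => M.sum_mem fun i _ => ?_)
  rw [(isAmpliation_starProjection V).apply_tmul]
  exact hcol i _ (mem_rowSubmodule.mp hf.2 i)

end shift

end lp

end

theorem reducing_for_compression_iff_tensor_general
    {m : ℕ}
    (s : lp (fun _ : ℕ => ℂ) 2 →L[ℂ] lp (fun _ : ℕ => ℂ) 2)
    (hs : ∀ a : ℕ, s (lp.single 2 a (1 : ℂ)) = lp.single 2 (a + 1) (1 : ℂ))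
    (S₁ : lp (fun _ : ℕ × (Fin m → ℕ) => ℂ) 2 →L[ℂ] lp (fun _ : ℕ × (Fin m → ℕ) => ℂ) 2)
    (hS₁ : ∀ (a : ℕ) (g : Fin m → ℕ),
      S₁ (lp.single 2 (a, g) (1 : ℂ)) = lp.single 2 (a + 1, g) (1 : ℂ))
    (Q₁ : Submodule ℂ (lp (fun _ : ℕ => ℂ) 2))
    (hQ₁closed : IsClosed (Q₁ : Set (lp (fun _ : ℕ => ℂ) 2)))
    (hQ₁inv : ∀ x ∈ Q₁, ContinuousLinearMap.adjoint s x ∈ Q₁)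
    (Q : Submodule ℂ (lp (fun _ : ℕ × (Fin m → ℕ) => ℂ) 2))
    (hQ : (Q : Set (lp (fun _ : ℕ × (Fin m → ℕ) => ℂ) 2)) =
      {f : lp (fun _ : ℕ × (Fin m → ℕ) => ℂ) 2 | ∀ g : Fin m → ℕ, ∃ q ∈ Q₁,
        ∀ a : ℕ, (q : ∀ _ : ℕ, ℂ) a = (f : ∀ _ : ℕ × (Fin m → ℕ), ℂ) (a, g)})
    (PQ : lp (fun _ : ℕ × (Fin m → ℕ) => ℂ) 2 →L[ℂ] lp (fun _ : ℕ × (Fin m → ℕ) => ℂ) 2)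
    (hPQsa : IsSelfAdjoint PQ) (hPQidem : PQ ∘L PQ = PQ)
    (hPQrange : Set.range PQ = (Q : Set (lp (fun _ : ℕ × (Fin m → ℕ) => ℂ) 2)))
    (M : Submodule ℂ (lp (fun _ : ℕ × (Fin m → ℕ) => ℂ) 2))
    (hMclosed : IsClosed (M : Set (lp (fun _ : ℕ × (Fin m → ℕ) => ℂ) 2)))
    (hMQ : M ≤ Q)
    (PM : lp (fun _ : ℕ × (Fin m → ℕ) => ℂ) 2 →L[ℂ] lp (fun _ : ℕ × (Fin m → ℕ) => ℂ) 2)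
    (hPMsa : IsSelfAdjoint PM) (hPMidem : PM ∘L PM = PM)
    (hPMrange : Set.range PM = (M : Set (lp (fun _ : ℕ × (Fin m → ℕ) => ℂ) 2))) :
    (PM ∘L (PQ ∘L S₁ ∘L PQ) = (PQ ∘L S₁ ∘L PQ) ∘L PM) ↔
      ∃ E : Submodule ℂ (lp (fun _ : Fin m → ℕ => ℂ) 2),
        IsClosed (E : Set (lp (fun _ : Fin m → ℕ => ℂ) 2)) ∧
        (M : Set (lp (fun _ : ℕ × (Fin m → ℕ) => ℂ) 2)) =
          {f : lp (fun _ : ℕ × (Fin m → ℕ) => ℂ) 2 |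
            (∀ g : Fin m → ℕ, ∃ q ∈ Q₁,
              ∀ a : ℕ, (q : ∀ _ : ℕ, ℂ) a = (f : ∀ _ : ℕ × (Fin m → ℕ), ℂ) (a, g)) ∧
            (∀ a : ℕ, ∃ e ∈ E,
              ∀ g : Fin m → ℕ,
                (e : ∀ _ : Fin m → ℕ, ℂ) g = (f : ∀ _ : ℕ × (Fin m → ℕ), ℂ) (a, g))} := by
  have : CompleteSpace Q₁ := hQ₁closed.completeSpace_coe
  obtain rfl : Q = lp.columnSubmodule (Fin m → ℕ) Q₁ := SetLike.coe_injective <| hQ.trans <| by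
    ext f
    simp only [lp.exists_mem_forall_eq_iff_column_mem, SetLike.mem_coe, lp.mem_columnSubmodule]
    rfl
  obtain ⟨_, rfl⟩ := Submodule.exists_eq_starProjection_of_range hPQsa hPQidem hPQrange
  obtain ⟨_, rfl⟩ := Submodule.exists_eq_starProjection_of_range hPMsa hPMidem hPMrange
  have hS : lp.IsAmpliation S₁ s := lp.isAmpliation_of_apply_single fun a g => by
    rw [hS₁, hs, lp.tmul_single_single, one_mul]
  change Commute M.starProjection ((lp.columnSubmodule _ Q₁).compression S₁) ↔ _
  simp only [M.commute_starProjection_iff, lp.exists_mem_forall_eq_iff_column_mem,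
    lp.exists_mem_forall_eq_iff_row_mem, ← lp.mem_columnSubmodule, ← lp.mem_rowSubmodule,
    ← Submodule.mem_inf, SetLike.setOfPred_mem_eq, SetLike.coe_set_eq]
  constructor
  · rintro ⟨hA, hA'⟩
    exact ⟨_, hMclosed.preimage (ContinuousLinearMap.continuous _),
      lp.eq_columnSubmodule_inf_rowSubmodule_of_reducing hs hS hQ₁inv hMclosed hMQ hA hA'⟩
  · rintro ⟨E, hE, rfl⟩
    rw [Submodule.adjoint_compression]
    exact ⟨hS.inf_rowSubmodule_mem_invtSubmodule_compression Q₁ hE,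
      hS.adjoint.inf_rowSubmodule_mem_invtSubmodule_compression Q₁ hE⟩

/-- Realize `H²(𝔻ⁿ) ≅ H²(𝔻) ⊗ H²(𝔻^m)` (`m = n - 1 ≥ 1`) as
`ℓ²(ℕ × ℕ^m)`, with `s` the shift on `H²(𝔻) ≅ ℓ²(ℕ)` and `S₁ = M_{z_1}` the shift in the first
variable.  Let `Q₁` be a quotient module of `H²(𝔻)` (closed, `s*`-invariant) and
`Q = Q₁ ⊗ H²(𝔻^m)` (the subspace of `f` whose first-variable slices all lie in `Q₁`), with
orthogonal projection `PQ`.  A closed subspace `M ⊆ Q` with orthogonal projection `PM` is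
reducing for the compression `P_Q M_{z_1}|_Q` (encoded by `PM` commuting with
`A = PQ S₁ PQ`) if and only if `M = Q₁ ⊗ E` for some closed subspace `E ⊆ H²(𝔻^m)`,
i.e. `M` consists of those `f` whose first-variable slices lie in `Q₁` and whose remaining-variable
slices lie in `E`. -/
theorem reducing_for_compression_iff_tensor
    {m : ℕ} (hm : 1 ≤ m)
    (s : lp (fun _ : ℕ => ℂ) 2 →L[ℂ] lp (fun _ : ℕ => ℂ) 2)
    (hs : ∀ a : ℕ, s (lp.single 2 a (1 : ℂ)) = lp.single 2 (a + 1) (1 : ℂ))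
    (S₁ : lp (fun _ : ℕ × (Fin m → ℕ) => ℂ) 2 →L[ℂ] lp (fun _ : ℕ × (Fin m → ℕ) => ℂ) 2)
    (hS₁ : ∀ (a : ℕ) (g : Fin m → ℕ),
      S₁ (lp.single 2 (a, g) (1 : ℂ)) = lp.single 2 (a + 1, g) (1 : ℂ))
    (Q₁ : Submodule ℂ (lp (fun _ : ℕ => ℂ) 2))
    (hQ₁closed : IsClosed (Q₁ : Set (lp (fun _ : ℕ => ℂ) 2)))
    (hQ₁inv : ∀ x ∈ Q₁, ContinuousLinearMap.adjoint s x ∈ Q₁)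
    (Q : Submodule ℂ (lp (fun _ : ℕ × (Fin m → ℕ) => ℂ) 2))
    (hQ : (Q : Set (lp (fun _ : ℕ × (Fin m → ℕ) => ℂ) 2)) =
      {f : lp (fun _ : ℕ × (Fin m → ℕ) => ℂ) 2 | ∀ g : Fin m → ℕ, ∃ q ∈ Q₁,
        ∀ a : ℕ, (q : ∀ _ : ℕ, ℂ) a = (f : ∀ _ : ℕ × (Fin m → ℕ), ℂ) (a, g)})
    (PQ : lp (fun _ : ℕ × (Fin m → ℕ) => ℂ) 2 →L[ℂ] lp (fun _ : ℕ × (Fin m → ℕ) => ℂ) 2)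
    (hPQsa : IsSelfAdjoint PQ) (hPQidem : PQ ∘L PQ = PQ)
    (hPQrange : Set.range PQ = (Q : Set (lp (fun _ : ℕ × (Fin m → ℕ) => ℂ) 2)))
    (M : Submodule ℂ (lp (fun _ : ℕ × (Fin m → ℕ) => ℂ) 2))
    (hMclosed : IsClosed (M : Set (lp (fun _ : ℕ × (Fin m → ℕ) => ℂ) 2)))
    (hMQ : M ≤ Q)
    (PM : lp (fun _ : ℕ × (Fin m → ℕ) => ℂ) 2 →L[ℂ] lp (fun _ : ℕ × (Fin m → ℕ) => ℂ) 2)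
    (hPMsa : IsSelfAdjoint PM) (hPMidem : PM ∘L PM = PM)
    (hPMrange : Set.range PM = (M : Set (lp (fun _ : ℕ × (Fin m → ℕ) => ℂ) 2))) :
    (PM ∘L (PQ ∘L S₁ ∘L PQ) = (PQ ∘L S₁ ∘L PQ) ∘L PM) ↔
      ∃ E : Submodule ℂ (lp (fun _ : Fin m → ℕ => ℂ) 2),
        IsClosed (E : Set (lp (fun _ : Fin m → ℕ => ℂ) 2)) ∧
        (M : Set (lp (fun _ : ℕ × (Fin m → ℕ) => ℂ) 2)) =
          {f : lp (fun _ : ℕ × (Fin m → ℕ) => ℂ) 2 |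
            (∀ g : Fin m → ℕ, ∃ q ∈ Q₁,
              ∀ a : ℕ, (q : ∀ _ : ℕ, ℂ) a = (f : ∀ _ : ℕ × (Fin m → ℕ), ℂ) (a, g)) ∧
            (∀ a : ℕ, ∃ e ∈ E,
              ∀ g : Fin m → ℕ,
                (e : ∀ _ : Fin m → ℕ, ℂ) g = (f : ∀ _ : ℕ × (Fin m → ℕ), ℂ) (a, g))} :=
  reducing_for_compression_iff_tensor_general s hs S₁ hS₁ Q₁ hQ₁closed hQ₁inv Q hQ PQ hPQsa hPQidem
    hPQrange M hMclosed hMQ PM hPMsa hPMidem hPMrange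
end

section
/- Let Q be a quotient module of H²(𝔻ⁿ) (n ≥ 2). If Q is doubly commuting, i.e., C_{z_i} C_{z_j}^* = C_{z_j}^* C_{z_i} for all i ≠ j where C_{z_i} = P_Q M_{z_i}|_Q, then there exist quotient modules Q_1, ..., Q_n of H²(𝔻) such that Q = Q_1 ⊗ ... ⊗ Q_n. -/
/-!
Let `Qⱼ` be the closed span of the `j`-th variable slices `a ↦ r (g[j ↦ a])` of all `r ∈ 𝒬`.
Slicing turns `S_j*` into `s*`, so `Qⱼ` is a quotient module, and the slices of every `f ∈ 𝒬` lie
in the `Qⱼ`. Conversely, suppose all slices of `f` lie in the `Qⱼ` and put `x = f - P f`.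

Key fact: if a set `V ⊥ 𝒬` is stable under `S_i*` for all `i ≠ j`, then the `j`-slices of every
`v ∈ V` are orthogonal to `Qⱼ`. Shifting back along the directions `i ≠ j` moves the slices of
`r ∈ 𝒬` and of `v` to the line through `0`, where their inner product is `⟪E r, v⟫` for the
product `E` of the projections `1 - S_i S_i*` onto `{k_i = 0}`, `i ≠ j`; peeling off one factor at
a time with `⟪(1 - S_i S_i*) y, v⟫ = ⟪y, v⟫ - ⟪S_i* y, S_i* v⟫` reduces this to `V ⊥ 𝒬`.

Double commutativity makes `S_i*` commute with `(1 - P) S_j` on `𝒬` for `i ≠ j`, so the key fact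
applies to `V = (1 - P) S_j 𝒬`. Hence if `y ⊥ 𝒬` has its `j`-slices in `Qⱼ`, then
`⟪S_j q, y⟫ = ⟪(1 - P) S_j q, y⟫ = 0` slice by slice, i.e. `S_j* y ⊥ 𝒬`. So the vectors `y ⊥ 𝒬`
with all slices in the `Q`'s form an `S_j*`-stable set for every `j`; it contains `x`, and the key
fact applied to it puts the slices of `x` in both `Qⱼ` and `Qⱼᗮ`. Thus `x = 0` and `f ∈ 𝒬`.
-/

open ContinuousLinearMap
open scoped InnerProductSpace

namespace DoublyCommuting

noncomputable section

local notation "ℓ²(" X ")" => lp (fun _ : X => ℂ) 2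

lemma inner_single_one_left {X : Type*} [DecidableEq X] (k : X) (f : ℓ²(X)) :
    ⟪lp.single 2 k 1, f⟫_ℂ = f k := by
  simp [lp.inner_single_left]

lemma adjoint_apply_eq_inner {X Y : Type*} [DecidableEq X] (T : ℓ²(X) →L[ℂ] ℓ²(Y))
    (y : ℓ²(Y)) (k : X) : adjoint T y k = ⟪T (lp.single 2 k 1), y⟫_ℂ := by
  rw [← adjoint_inner_right, inner_single_one_left]

lemma memℓp_comp_injective {X Y : Type*} {e : X → Y} (he : e.Injective) (f : ℓ²(Y)) :
    Memℓp (fun x => f (e x)) 2 :=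
  memℓp_gen (((lp.memℓp f).summable (by norm_num)).comp_injective he)

def lpIndicator {X : Type*} (A : Set X) (x : ℓ²(X)) : ℓ²(X) :=
  ⟨A.indicator x, (lp.memℓp x).mono' fun k => norm_indicator_le_norm_self x k⟩

@[simp]
lemma lpIndicator_apply {X : Type*} (A : Set X) (x : ℓ²(X)) (k : X) :
    lpIndicator A x k = A.indicator x k := rfl

lemma exists_eq_add_single {ι : Type*} [DecidableEq ι] {k : ι → ℕ} {i : ι} (hk : k i ≠ 0) :
    ∃ k' : ι → ℕ, k = k' + Pi.single i 1 :=
  ⟨Function.update k i (k i - 1), by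
    ext l
    by_cases hl : l = i
    · subst hl; simp; omega
    · simp [hl]⟩

lemma adjoint_starProjection_apply_of_compression_commute {E : Type*} [NormedAddCommGroup E]
    [InnerProductSpace ℂ E] [CompleteSpace E] {K : Submodule ℂ E} [K.HasOrthogonalProjection]
    {A B : E →L[ℂ] E} (hA : ∀ x ∈ K, adjoint A x ∈ K)
    (hAB : (K.starProjection ∘L B ∘L K.starProjection) ∘L
          adjoint (K.starProjection ∘L A ∘L K.starProjection)
        = adjoint (K.starProjection ∘L A ∘L K.starProjection) ∘L
          (K.starProjection ∘L B ∘L K.starProjection))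
    {q : E} (hq : q ∈ K) :
    adjoint A (K.starProjection (B q)) = K.starProjection (B (adjoint A q)) := by
  have hP : adjoint K.starProjection = K.starProjection :=
    (isSelfAdjoint_starProjection K).adjoint_eq
  have hPmem {x} (hx : x ∈ K) : K.starProjection x = x :=
    Submodule.starProjection_eq_self_iff.mpr hx
  have h := congr($hAB q)
  simp only [adjoint_comp, hP, comp_apply, hPmem hq, hPmem (K.starProjection_apply_mem _),
    hPmem (hA q hq), hPmem (hA _ (K.starProjection_apply_mem _))] at h
  exact h.symm

section Slice

variable {ι : Type*} [DecidableEq ι]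

def slice (j : ι) (g : ι → ℕ) : ℓ²(ι → ℕ) →ₗ[ℂ] ℓ²(ℕ) where
  toFun f := ⟨fun a => f (Function.update g j a),
    memℓp_comp_injective (Function.update_injective g j) f⟩
  map_add' _ _ := rfl
  map_smul' _ _ := rfl

@[simp]
lemma slice_apply (j : ι) (g : ι → ℕ) (f : ℓ²(ι → ℕ)) (a : ℕ) :
    slice j g f a = f (Function.update g j a) := rfl

lemma slice_congr {j : ι} {g g' : ι → ℕ} (h : ∀ i, i ≠ j → g i = g' i) :
    slice j g = slice j g' := by
  have hupd (a : ℕ) : Function.update g j a = Function.update g' j a := by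
    ext i
    by_cases hi : i = j
    · subst hi; simp
    · simp [hi, h i hi]
  ext f a
  simp only [slice_apply, hupd]

def lineEquiv (j : ι) : {g : ι → ℕ // g j = 0} × ℕ ≃ (ι → ℕ) where
  toFun p := Function.update p.1 j p.2
  invFun k := (⟨Function.update k j 0, by simp⟩, k j)
  left_inv := by
    rintro ⟨⟨g, hg⟩, a⟩
    ext i
    · by_cases hi : i = j
      · subst hi; simp [hg]
      · simp [hi]
    · simp
  right_inv k := by simp

lemma inner_eq_tsum_inner_slice (j : ι) (x y : ℓ²(ι → ℕ)) :
    ⟪x, y⟫_ℂ = ∑' g : {g : ι → ℕ // g j = 0}, ⟪slice j g x, slice j g y⟫_ℂ := by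
  have hsum : Summable fun p => ⟪x (lineEquiv j p), y (lineEquiv j p)⟫_ℂ :=
    (lineEquiv j).summable_iff.mpr (lp.summable_inner x y)
  rw [lp.inner_eq_tsum, ← (lineEquiv j).tsum_eq,
    hsum.tsum_prod' fun g => lp.summable_inner (slice j g.1 x) (slice j g.1 y)]
  simp only [lp.inner_eq_tsum]
  rfl

lemma inner_lpIndicator_line [Fintype ι] (j : ι) (a b : ℓ²(ι → ℕ)) :
    ⟪lpIndicator {k | ∀ i ∈ Finset.univ.erase j, k i = 0} a, b⟫_ℂ
      = ⟪slice j 0 a, slice j 0 b⟫_ℂ := by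
  rw [inner_eq_tsum_inner_slice j, tsum_eq_single ⟨0, rfl⟩]
  · congr 1
    ext t
    simp [Function.update_apply]
  · rintro ⟨g, hgj⟩ hg
    obtain ⟨i, hij, hgi⟩ : ∃ i, i ≠ j ∧ g i ≠ 0 := by
      by_contra! h
      exact hg (Subtype.ext (funext fun i => if hi : i = j then hi ▸ hgj else h i hi))
    have : slice j g (lpIndicator {k | ∀ i ∈ Finset.univ.erase j, k i = 0} a) = 0 := by
      ext t
      simpa using fun h => absurd (by simpa [hij] using h i hij) hgi
    rw [this, inner_zero_left]

/-- The paper's one-variable quotient module `Qⱼ`. -/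
def sliceSpan (𝒬 : Submodule ℂ ℓ²(ι → ℕ)) (j : ι) : Submodule ℂ ℓ²(ℕ) :=
  (⨆ g, 𝒬.map (slice j g)).topologicalClosure

variable {𝒬 : Submodule ℂ ℓ²(ι → ℕ)}

lemma isClosed_sliceSpan (j : ι) : IsClosed (sliceSpan 𝒬 j : Set ℓ²(ℕ)) :=
  Submodule.isClosed_topologicalClosure _

lemma slice_mem_sliceSpan {r : ℓ²(ι → ℕ)} (hr : r ∈ 𝒬) (j : ι) (g : ι → ℕ) :
    slice j g r ∈ sliceSpan 𝒬 j :=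
  Submodule.le_topologicalClosure _ (Submodule.mem_iSup_of_mem g (Submodule.mem_map_of_mem hr))

end Slice

variable {ι : Type*} [Fintype ι] [DecidableEq ι]

/-- `S i` is multiplication by `z_i` on `H²(𝔻^ι) ≅ ℓ²(ι → ℕ)`. -/
def IsCoordShift (S : ι → ℓ²(ι → ℕ) →L[ℂ] ℓ²(ι → ℕ)) : Prop :=
  ∀ i k, S i (lp.single 2 k 1) = lp.single 2 (k + Pi.single i 1) 1

namespace IsCoordShift

variable {S : ι → ℓ²(ι → ℕ) →L[ℂ] ℓ²(ι → ℕ)} (hS : IsCoordShift S)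
include hS

lemma adjoint_apply (i : ι) (x : ℓ²(ι → ℕ)) (k : ι → ℕ) :
    adjoint (S i) x k = x (k + Pi.single i 1) := by
  rw [adjoint_apply_eq_inner, hS, inner_single_one_left]

lemma adjoint_single_add_single (i : ι) (k : ι → ℕ) :
    adjoint (S i) (lp.single 2 (k + Pi.single i 1) 1) = lp.single 2 k 1 := by
  ext l
  simp only [hS.adjoint_apply, lp.single_apply, Pi.single_apply, add_left_inj]

lemma adjoint_single_eq_zero {i : ι} {k : ι → ℕ} (hk : k i = 0) :
    adjoint (S i) (lp.single 2 k 1) = 0 := by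
  ext l
  have : l + Pi.single i 1 ≠ k := fun h => by simp [← h] at hk
  simp [hS.adjoint_apply, lp.single_apply, this]

lemma apply_add_single (i : ι) (x : ℓ²(ι → ℕ)) (k : ι → ℕ) :
    S i x (k + Pi.single i 1) = x k := by
  rw [← inner_single_one_left, ← adjoint_inner_left, hS.adjoint_single_add_single,
    inner_single_one_left]

lemma apply_eq_zero {i : ι} (x : ℓ²(ι → ℕ)) {k : ι → ℕ} (hk : k i = 0) : S i x k = 0 := by
  rw [← inner_single_one_left, ← adjoint_inner_left, hS.adjoint_single_eq_zero hk,
    inner_zero_left]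

lemma adjoint_apply_comm {i j : ι} (hij : i ≠ j) (x : ℓ²(ι → ℕ)) :
    adjoint (S i) (S j x) = S j (adjoint (S i) x) := by
  ext k
  rw [hS.adjoint_apply]
  by_cases hk : k j = 0
  · rw [hS.apply_eq_zero _ hk, hS.apply_eq_zero _ (by simp [hk, hij.symm])]
  · obtain ⟨k, rfl⟩ := exists_eq_add_single hk
    rw [add_right_comm, hS.apply_add_single, hS.apply_add_single, hS.adjoint_apply]

lemma sub_apply_adjoint (i : ι) (x : ℓ²(ι → ℕ)) :
    x - S i (adjoint (S i) x) = lpIndicator {k | k i = 0} x := by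
  ext k
  by_cases hk : k i = 0
  · simp [hS.apply_eq_zero _ hk, hk]
  · obtain ⟨k, rfl⟩ := exists_eq_add_single hk
    simp [hS.apply_add_single, hS.adjoint_apply]

lemma adjoint_lpIndicator (i : ι) (A : Set (ι → ℕ)) (x : ℓ²(ι → ℕ)) :
    adjoint (S i) (lpIndicator A x)
      = lpIndicator ((· + Pi.single i 1) ⁻¹' A) (adjoint (S i) x) := by
  ext k
  classical
  simp only [hS.adjoint_apply, lpIndicator_apply, Set.indicator_apply, Set.mem_preimage]

lemma inner_lpIndicator_eq_zero {A B : Set ℓ²(ι → ℕ)}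
    (hAB : ∀ a ∈ A, ∀ b ∈ B, ⟪a, b⟫_ℂ = 0) (F : Finset ι)
    (hA : ∀ i ∈ F, ∀ a ∈ A, adjoint (S i) a ∈ A) (hB : ∀ i ∈ F, ∀ b ∈ B, adjoint (S i) b ∈ B)
    {a : ℓ²(ι → ℕ)} (ha : a ∈ A) {b : ℓ²(ι → ℕ)} (hb : b ∈ B) :
    ⟪lpIndicator {k | ∀ i ∈ F, k i = 0} a, b⟫_ℂ = 0 := by
  induction F using Finset.induction_on generalizing a b with
  | empty => simpa [lpIndicator] using hAB a ha b hb
  | insert i F hiF ih =>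
    set z := lpIndicator {k : ι → ℕ | ∀ l ∈ F, k l = 0} a
    have hsplit : lpIndicator {k | ∀ l ∈ insert i F, k l = 0} a = z - S i (adjoint (S i) z) := by
      rw [hS.sub_apply_adjoint]
      ext k
      simp [z, Set.indicator_apply, ite_and]
    have hcomm : adjoint (S i) z = lpIndicator {k | ∀ l ∈ F, k l = 0} (adjoint (S i) a) := by
      rw [hS.adjoint_lpIndicator]
      congr 1
      ext k
      simp only [Set.mem_preimage, Set.mem_ofPred_eq, Pi.add_apply]
      refine forall₂_congr fun l hl => ?_
      rw [Pi.single_eq_of_ne (ne_of_mem_of_not_mem hl hiF), add_zero]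
    have hA' := fun l hl => hA l (Finset.mem_insert_of_mem hl)
    have hB' := fun l hl => hB l (Finset.mem_insert_of_mem hl)
    rw [hsplit, inner_sub_left, ← adjoint_inner_right, hcomm,
      ih hA' hB' ha hb, ih hA' hB' (hA i (F.mem_insert_self i) a ha)
        (hB i (F.mem_insert_self i) b hb), sub_zero]

lemma slice_adjoint_of_ne {i j : ι} (hij : i ≠ j) (g : ι → ℕ) (x : ℓ²(ι → ℕ)) :
    slice j g (adjoint (S i) x) = slice j (g + Pi.single i 1) x := by
  ext a
  have hupd : Function.update g j a + Pi.single i 1 = Function.update (g + Pi.single i 1) j a := by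
    ext l
    by_cases hl : l = j
    · subst hl; simp [hij]
    · simp [hl]
  rw [slice_apply, slice_apply, hS.adjoint_apply, hupd]

lemma slice_adjoint_self {s : ℓ²(ℕ) →L[ℂ] ℓ²(ℕ)}
    (hs : ∀ a, s (lp.single 2 a 1) = lp.single 2 (a + 1) 1) (j : ι) (g : ι → ℕ)
    (x : ℓ²(ι → ℕ)) : slice j g (adjoint (S j) x) = adjoint s (slice j g x) := by
  have hupd (a : ℕ) : Function.update g j a + Pi.single j 1 = Function.update g j (a + 1) := by
    ext l
    by_cases hl : l = j
    · subst hl; simp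
    · simp [hl]
  ext a
  rw [adjoint_apply_eq_inner, hs, inner_single_one_left, slice_apply, slice_apply,
    hS.adjoint_apply, hupd]

lemma exists_slice_eq_slice_zero {j : ι} {V : Set ℓ²(ι → ℕ)}
    (hV : ∀ i, i ≠ j → ∀ v ∈ V, adjoint (S i) v ∈ V) (g : ι → ℕ) {v : ℓ²(ι → ℕ)} (hv : v ∈ V) :
    ∃ v' ∈ V, slice j g v = slice j 0 v' := by
  induction g using WellFoundedLT.induction generalizing v with
  | _ g ih =>
    by_cases hg : ∃ i, i ≠ j ∧ g i ≠ 0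
    · obtain ⟨i, hij, hgi⟩ := hg
      obtain ⟨g, rfl⟩ := exists_eq_add_single hgi
      obtain ⟨v', hv', h⟩ := ih g (lt_add_of_pos_right g (by simp)) (hV i hij v hv)
      exact ⟨v', hv', by rw [← hS.slice_adjoint_of_ne hij, h]⟩
    · push Not at hg
      exact ⟨v, hv, by rw [slice_congr fun i hi => hg i hi]; rfl⟩

lemma inner_slice_eq_zero {j : ι} {A B : Set ℓ²(ι → ℕ)} (hAB : ∀ a ∈ A, ∀ b ∈ B, ⟪a, b⟫_ℂ = 0)
    (hA : ∀ i, i ≠ j → ∀ a ∈ A, adjoint (S i) a ∈ A)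
    (hB : ∀ i, i ≠ j → ∀ b ∈ B, adjoint (S i) b ∈ B)
    (g γ : ι → ℕ) {a : ℓ²(ι → ℕ)} (ha : a ∈ A) {b : ℓ²(ι → ℕ)} (hb : b ∈ B) :
    ⟪slice j g a, slice j γ b⟫_ℂ = 0 := by
  obtain ⟨a', ha', hga⟩ := hS.exists_slice_eq_slice_zero hA g ha
  obtain ⟨b', hb', hγb⟩ := hS.exists_slice_eq_slice_zero hB γ hb
  rw [hga, hγb, ← inner_lpIndicator_line]
  exact hS.inner_lpIndicator_eq_zero hAB _ (fun i hi => hA i (Finset.ne_of_mem_erase hi))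
    (fun i hi => hB i (Finset.ne_of_mem_erase hi)) ha' hb'

variable {𝒬 : Submodule ℂ ℓ²(ι → ℕ)}

lemma adjoint_mem_sliceSpan {s : ℓ²(ℕ) →L[ℂ] ℓ²(ℕ)}
    (hs : ∀ a, s (lp.single 2 a 1) = lp.single 2 (a + 1) 1) {j : ι}
    (h𝒬 : ∀ x ∈ 𝒬, adjoint (S j) x ∈ 𝒬) {h : ℓ²(ℕ)} (hh : h ∈ sliceSpan 𝒬 j) :
    adjoint s h ∈ sliceSpan 𝒬 j := by
  refine Submodule.topologicalClosure_minimal (t := (sliceSpan 𝒬 j).comap (adjoint s).toLinearMap)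
    _ ?_ ((isClosed_sliceSpan j).preimage (adjoint s).continuous) hh
  refine iSup_le fun g => Submodule.map_le_iff_le_comap.mpr fun r hr => ?_
  change adjoint s (slice j g r) ∈ sliceSpan 𝒬 j
  rw [← hS.slice_adjoint_self hs]
  exact slice_mem_sliceSpan (h𝒬 r hr) j g

lemma slice_mem_sliceSpan_orthogonal {j : ι} (h𝒬 : ∀ i, i ≠ j → ∀ x ∈ 𝒬, adjoint (S i) x ∈ 𝒬)
    {V : Set ℓ²(ι → ℕ)} (hV𝒬 : V ⊆ 𝒬ᗮ) (hV : ∀ i, i ≠ j → ∀ v ∈ V, adjoint (S i) v ∈ V)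
    {v : ℓ²(ι → ℕ)} (hv : v ∈ V) (g : ι → ℕ) :
    slice j g v ∈ (sliceSpan 𝒬 j)ᗮ := by
  rw [sliceSpan, Submodule.orthogonal_closure, Submodule.mem_orthogonal]
  intro u hu
  refine Submodule.iSup_induction (motive := fun u => ⟪u, slice j g v⟫_ℂ = 0) _ hu
    (fun γ u hu => ?_) (inner_zero_left _)
    fun u w hu hw => by rw [inner_add_left, hu, hw, add_zero]
  obtain ⟨r, hr, rfl⟩ := hu
  exact hS.inner_slice_eq_zero
    (fun a ha b hb => Submodule.inner_right_of_mem_orthogonal ha (hV𝒬 hb)) h𝒬 hV γ g hr hv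

variable [𝒬.HasOrthogonalProjection]

lemma adjoint_mem_orthogonal {j : ι} (h𝒬 : ∀ i, i ≠ j → ∀ x ∈ 𝒬, adjoint (S i) x ∈ 𝒬)
    (hdc : ∀ i, i ≠ j →
      (𝒬.starProjection ∘L S j ∘L 𝒬.starProjection) ∘L
          adjoint (𝒬.starProjection ∘L S i ∘L 𝒬.starProjection)
        = adjoint (𝒬.starProjection ∘L S i ∘L 𝒬.starProjection) ∘L
          (𝒬.starProjection ∘L S j ∘L 𝒬.starProjection))
    {x : ℓ²(ι → ℕ)} (hx : x ∈ 𝒬ᗮ) (hxj : ∀ g, slice j g x ∈ sliceSpan 𝒬 j) :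
    adjoint (S j) x ∈ 𝒬ᗮ := by
  set V := {y | ∃ q ∈ 𝒬, S j q - 𝒬.starProjection (S j q) = y}
  have hV𝒬 : V ⊆ 𝒬ᗮ := by
    rintro _ ⟨q, -, rfl⟩
    exact 𝒬.sub_starProjection_mem_orthogonal _
  have hV : ∀ i, i ≠ j → ∀ v ∈ V, adjoint (S i) v ∈ V := by
    rintro i hij _ ⟨q, hq, rfl⟩
    refine ⟨adjoint (S i) q, h𝒬 i hij q hq, ?_⟩
    rw [map_sub, hS.adjoint_apply_comm hij,
      adjoint_starProjection_apply_of_compression_commute (h𝒬 i hij) (hdc i hij) hq]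
  rw [Submodule.mem_orthogonal]
  intro q hq
  rw [adjoint_inner_right, ← sub_add_cancel (S j q) (𝒬.starProjection (S j q)), inner_add_left,
    Submodule.inner_right_of_mem_orthogonal (𝒬.starProjection_apply_mem _) hx, add_zero,
    inner_eq_tsum_inner_slice j]
  refine (tsum_congr fun g => ?_).trans tsum_zero
  exact Submodule.inner_left_of_mem_orthogonal (hxj g)
    (hS.slice_mem_sliceSpan_orthogonal h𝒬 hV𝒬 hV ⟨q, hq, rfl⟩ g)

lemma mem_of_forall_slice_mem_sliceSpan [Nonempty ι] {s : ℓ²(ℕ) →L[ℂ] ℓ²(ℕ)}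
    (hs : ∀ a, s (lp.single 2 a 1) = lp.single 2 (a + 1) 1)
    (h𝒬 : ∀ i, ∀ x ∈ 𝒬, adjoint (S i) x ∈ 𝒬)
    (hdc : ∀ i j, i ≠ j →
      (𝒬.starProjection ∘L S i ∘L 𝒬.starProjection) ∘L
          adjoint (𝒬.starProjection ∘L S j ∘L 𝒬.starProjection)
        = adjoint (𝒬.starProjection ∘L S j ∘L 𝒬.starProjection) ∘L
          (𝒬.starProjection ∘L S i ∘L 𝒬.starProjection))
    {f : ℓ²(ι → ℕ)} (hf : ∀ j g, slice j g f ∈ sliceSpan 𝒬 j) : f ∈ 𝒬 := by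
  set G := {x | x ∈ 𝒬ᗮ ∧ ∀ j g, slice j g x ∈ sliceSpan 𝒬 j}
  have hG : ∀ i, ∀ x ∈ G, adjoint (S i) x ∈ G := by
    rintro i x ⟨hx, hxs⟩
    refine ⟨hS.adjoint_mem_orthogonal (fun l _ => h𝒬 l) (fun l hli => hdc i l hli.symm) hx (hxs i),
      fun j g => ?_⟩
    obtain rfl | hij := eq_or_ne i j
    · rw [hS.slice_adjoint_self hs]
      exact hS.adjoint_mem_sliceSpan hs (h𝒬 i) (hxs i g)
    · rw [hS.slice_adjoint_of_ne hij]
      exact hxs j _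
  have hfG : f - 𝒬.starProjection f ∈ G :=
    ⟨𝒬.sub_starProjection_mem_orthogonal f, fun j g => by
      rw [map_sub]
      exact sub_mem (hf j g) (slice_mem_sliceSpan (𝒬.starProjection_apply_mem f) j g)⟩
  obtain ⟨j⟩ := ‹Nonempty ι›
  have hslice (g : ι → ℕ) : slice j g (f - 𝒬.starProjection f) = 0 :=
    inner_self_eq_zero.mp (Submodule.inner_right_of_mem_orthogonal (hfG.2 j g)
      (hS.slice_mem_sliceSpan_orthogonal (fun i _ => h𝒬 i) (fun _ hx => hx.1)
        (fun i _ => hG i) hfG g))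
  have hzero : f - 𝒬.starProjection f = 0 := by
    ext k
    simpa using congr($(hslice k) (k j))
  rw [← Submodule.starProjection_eq_self_iff, ← sub_eq_zero.mp hzero]

end IsCoordShift

end

end DoublyCommuting

open DoublyCommuting in
/-- Realize `H²(𝔻) ≅ ℓ²(ℕ)` with shift `s` and
`H²(𝔻ⁿ) ≅ ℓ²(ℕⁿ)` (`n ≥ 2`) with coordinate shifts `S i`.  Let `Q` be a quotient module of
`H²(𝔻ⁿ)` (closed, invariant under every `(S i)*`) with orthogonal projection `PQ`.  If `Q` is
doubly commuting, i.e. the compressions `A i = PQ ∘ S i ∘ PQ` satisfy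
`A i (A j)* = (A j)* A i` for all `i ≠ j`, then there are quotient modules `Q₁, …, Qₙ` of
`H²(𝔻)` with `Q = Q₁ ⊗ ⋯ ⊗ Qₙ`: `Q` is the set of `f` whose `i`-th variable slices lie in
`Q i` for every `i`. -/
theorem doubly_commuting_quotient_module_is_tensor
    {n : ℕ} (hn : 2 ≤ n)
    (s : lp (fun _ : ℕ => ℂ) 2 →L[ℂ] lp (fun _ : ℕ => ℂ) 2)
    (hs : ∀ a : ℕ, s (lp.single 2 a (1 : ℂ)) = lp.single 2 (a + 1) (1 : ℂ))
    (S : Fin n → (lp (fun _ : Fin n → ℕ => ℂ) 2 →L[ℂ] lp (fun _ : Fin n → ℕ => ℂ) 2))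
    (hS : ∀ (i : Fin n) (k : Fin n → ℕ),
      S i (lp.single 2 k (1 : ℂ)) = lp.single 2 (k + Pi.single i 1) (1 : ℂ))
    (𝒬 : Submodule ℂ (lp (fun _ : Fin n → ℕ => ℂ) 2))
    (h𝒬closed : IsClosed (𝒬 : Set (lp (fun _ : Fin n → ℕ => ℂ) 2)))
    (h𝒬inv : ∀ i, ∀ x ∈ 𝒬, ContinuousLinearMap.adjoint (S i) x ∈ 𝒬)
    (PQ : lp (fun _ : Fin n → ℕ => ℂ) 2 →L[ℂ] lp (fun _ : Fin n → ℕ => ℂ) 2)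
    (hPQsa : IsSelfAdjoint PQ) (hPQidem : PQ ∘L PQ = PQ)
    (hPQrange : Set.range PQ = (𝒬 : Set (lp (fun _ : Fin n → ℕ => ℂ) 2)))
    (hdc : ∀ i j, i ≠ j →
      (PQ ∘L S i ∘L PQ) ∘L ContinuousLinearMap.adjoint (PQ ∘L S j ∘L PQ)
        = ContinuousLinearMap.adjoint (PQ ∘L S j ∘L PQ) ∘L (PQ ∘L S i ∘L PQ)) :
    ∃ Q : Fin n → Submodule ℂ (lp (fun _ : ℕ => ℂ) 2),
      (∀ i, IsClosed (Q i : Set (lp (fun _ : ℕ => ℂ) 2))) ∧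
      (∀ i, ∀ x ∈ Q i, ContinuousLinearMap.adjoint s x ∈ Q i) ∧
      (𝒬 : Set (lp (fun _ : Fin n → ℕ => ℂ) 2)) =
        {f : lp (fun _ : Fin n → ℕ => ℂ) 2 | ∀ (i : Fin n) (g : Fin n → ℕ), ∃ q ∈ Q i,
          ∀ a : ℕ, (q : ∀ _ : ℕ, ℂ) a = (f : ∀ _ : Fin n → ℕ, ℂ) (Function.update g i a)} := by
  have : CompleteSpace 𝒬 := h𝒬closed.completeSpace_coe
  obtain rfl : PQ = 𝒬.starProjection := by
    refine (IsStarProjection.ext_iff ⟨hPQidem, hPQsa⟩ isStarProjection_starProjection).mpr ?_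
    rw [Submodule.range_starProjection]
    exact SetLike.coe_injective hPQrange
  have : Nonempty (Fin n) := ⟨⟨0, by omega⟩⟩
  refine ⟨sliceSpan 𝒬, isClosed_sliceSpan,
    fun i _ => IsCoordShift.adjoint_mem_sliceSpan hS hs (h𝒬inv i), ?_⟩
  ext f
  refine ⟨fun hf i g => ⟨_, slice_mem_sliceSpan hf i g, fun _ => rfl⟩, fun hf => ?_⟩
  refine IsCoordShift.mem_of_forall_slice_mem_sliceSpan hS hs h𝒬inv hdc fun j g => ?_
  obtain ⟨q, hq, hqf⟩ := hf j g
  rwa [show slice j g f = q from lp.ext (funext fun a => (hqf a).symm)]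
end

section
/- The tensor-product representation of a doubly commuting quotient module is unique: if Q_1 ⊗ ... ⊗ Q_n = R_1 ⊗ ... ⊗ R_n as subspaces of H²(𝔻ⁿ), where all Q_i and R_i are quotient modules of H²(𝔻), then Q_i = R_i for every i. -/
open ContinuousLinearMap

open scoped InnerProductSpace

open scoped ENNReal

private lemma summable_pi_prod : ∀ (n : ℕ) (a : Fin n → ℕ → ℝ),
    (∀ j, Summable (a j)) → (∀ j k, 0 ≤ a j k) →
    Summable fun g : Fin n → ℕ => ∏ j, a j (g j) := by
  intro n
  induction n with
  | zero =>
      intro a _ _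
      simpa using summable_of_finite_support (Set.toFinite _)
  | succ n ih =>
      intro a ha h0
      have htail : Summable fun g : Fin n → ℕ => ∏ j, a j.succ (g j) :=
        ih (fun j => a j.succ) (fun j => ha j.succ) (fun j k => h0 j.succ k)
      have h1 := Summable.mul_of_nonneg (ha 0) htail (fun k => h0 0 k)
        (fun x => Finset.prod_nonneg fun j _ => h0 j.succ (x j))
      refine ((Fin.consEquiv (fun _ : Fin (n+1) => ℕ)).summable_iff).1
        (h1.congr fun x => ?_)
      simp [Fin.consEquiv, Fin.prod_univ_succ, Fin.cons_succ, Fin.cons_zero]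

private lemma tensor_le_aux {n : ℕ}
    (Q R : Fin n → Submodule ℂ (lp (fun _ : ℕ => ℂ) 2))
    (hQne : ∀ i, Q i ≠ ⊥)
    (hsub :
      {f : lp (fun _ : Fin n → ℕ => ℂ) 2 | ∀ (i : Fin n) (g : Fin n → ℕ), ∃ q ∈ Q i,
        ∀ a : ℕ, (q : ∀ _ : ℕ, ℂ) a = (f : ∀ _ : Fin n → ℕ, ℂ) (Function.update g i a)}
      ⊆
      {f : lp (fun _ : Fin n → ℕ => ℂ) 2 | ∀ (i : Fin n) (g : Fin n → ℕ), ∃ q ∈ R i,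
        ∀ a : ℕ, (q : ∀ _ : ℕ, ℂ) a = (f : ∀ _ : Fin n → ℕ, ℂ) (Function.update g i a)}) :
    ∀ i, Q i ≤ R i := by
  intro i q hq
  -- choose nonzero elements of each Q j
  have hex : ∀ j, ∃ x, x ∈ Q j ∧ x ≠ 0 := by
    intro j
    obtain ⟨x, hx, hx0⟩ := (Submodule.ne_bot_iff (Q j)).mp (hQne j)
    exact ⟨x, hx, hx0⟩
  choose qs hqsQ hqs0 using hex
  -- choose a point where each qs j is nonzero
  have hexb : ∀ j, ∃ a : ℕ, (qs j : ∀ _ : ℕ, ℂ) a ≠ 0 := by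
    intro j
    by_contra h
    push_neg at h
    exact hqs0 j (lp.ext (funext fun a => h a))
  choose b hb using hexb
  -- the family of factors
  set p : Fin n → lp (fun _ : ℕ => ℂ) 2 := Function.update qs i q with hp
  have hpQ : ∀ j, p j ∈ Q j := by
    intro j
    by_cases hj : j = i
    · subst hj; simpa [hp] using hq
    · simpa [hp, Function.update_of_ne hj] using hqsQ j
  -- the tensor function
  set F : (Fin n → ℕ) → ℂ := fun g => ∏ j, (p j : ∀ _ : ℕ, ℂ) (g j) with hF
  -- slice identity
  have hslice : ∀ (j : Fin n) (g : Fin n → ℕ) (a : ℕ),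
      F (Function.update g j a) =
        (p j : ∀ _ : ℕ, ℂ) a * ∏ k ∈ Finset.univ.erase j, (p k : ∀ _ : ℕ, ℂ) (g k) := by
    intro j g a
    have : (fun k => (p k : ∀ _ : ℕ, ℂ) (Function.update g j a k)) =
        Function.update (fun k => (p k : ∀ _ : ℕ, ℂ) (g k)) j ((p j : ∀ _ : ℕ, ℂ) a) := by
      funext k
      by_cases hk : k = j
      · subst hk; simp
      · simp [Function.update_of_ne hk]
    calc F (Function.update g j a)
        = ∏ k, (p k : ∀ _ : ℕ, ℂ) (Function.update g j a k) := rfl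
      _ = ∏ k, Function.update (fun k => (p k : ∀ _ : ℕ, ℂ) (g k)) j
            ((p j : ∀ _ : ℕ, ℂ) a) k := by rw [this]
      _ = _ := by
          rw [Finset.prod_update_of_mem (Finset.mem_univ j)]
          rw [Finset.sdiff_singleton_eq_erase]
  -- F is in ℓ²
  have hmem : Memℓp F 2 := by
    apply memℓp_gen
    have h2 : (2 : ℝ≥0∞).toReal = ((2 : ℕ) : ℝ) := by norm_num
    have hsum : Summable fun g : Fin n → ℕ =>
        ∏ j, ‖(p j : ∀ _ : ℕ, ℂ) (g j)‖ ^ (2 : ℕ) := by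
      have := summable_pi_prod n (fun j k => ‖(p j : ∀ _ : ℕ, ℂ) k‖ ^ (2 : ℕ))
        (fun j => by
          have hj := lp.memℓp (p j)
          have := (memℓp_gen_iff (by norm_num : (0:ℝ) < (2:ℝ≥0∞).toReal)).mp hj
          refine this.congr fun k => ?_
          rw [h2, Real.rpow_natCast])
        (fun j k => by positivity)
      exact this
    refine hsum.congr fun g => ?_
    rw [h2, Real.rpow_natCast, hF]
    rw [norm_prod, ← Finset.prod_pow]
  set f : lp (fun _ : Fin n → ℕ => ℂ) 2 := ⟨F, hmem⟩ with hfdef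
  have hfcoe : (f : ∀ _ : Fin n → ℕ, ℂ) = F := rfl
  -- f belongs to the Q-tensor set
  have hfQ : f ∈ {f : lp (fun _ : Fin n → ℕ => ℂ) 2 | ∀ (i : Fin n) (g : Fin n → ℕ),
      ∃ q ∈ Q i, ∀ a : ℕ, (q : ∀ _ : ℕ, ℂ) a = (f : ∀ _ : Fin n → ℕ, ℂ)
        (Function.update g i a)} := by
    intro j g
    refine ⟨(∏ k ∈ Finset.univ.erase j, (p k : ∀ _ : ℕ, ℂ) (g k)) • p j,
      Submodule.smul_mem _ _ (hpQ j), fun a => ?_⟩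
    rw [hfcoe, hslice j g a, lp.coeFn_smul, Pi.smul_apply, smul_eq_mul, mul_comm]
  -- hence f belongs to the R-tensor set
  have hfR := hsub hfQ
  obtain ⟨r, hrR, hr⟩ := hfR i b
  -- the scalar
  set c : ℂ := ∏ k ∈ Finset.univ.erase i, (p k : ∀ _ : ℕ, ℂ) (b k) with hc
  have hc0 : c ≠ 0 := by
    rw [hc]
    apply Finset.prod_ne_zero_iff.mpr
    intro k hk
    have hki : k ≠ i := Finset.ne_of_mem_erase hk
    rw [hp, Function.update_of_ne hki]
    exact hb k
  have hpi : p i = q := by rw [hp]; simp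
  have hrq : r = c • q := by
    apply lp.ext
    funext a
    rw [lp.coeFn_smul, Pi.smul_apply, smul_eq_mul]
    rw [hr a, hfcoe, hslice i b a, hpi, mul_comm]
  have : q = c⁻¹ • r := by
    rw [hrq, smul_smul, inv_mul_cancel₀ hc0, one_smul]
  rw [this]
  exact Submodule.smul_mem _ _ hrR

/-- Realize `H²(𝔻) ≅ ℓ²(ℕ)` with shift `s` and `H²(𝔻ⁿ) ≅ ℓ²(ℕⁿ)`.  The
tensor-product representation of a doubly commuting quotient module is unique: if
`Q₁ ⊗ ⋯ ⊗ Qₙ = R₁ ⊗ ⋯ ⊗ Rₙ` as subspaces of `H²(𝔻ⁿ)` (each tensor product realized as the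
set of `f` whose `i`-th variable slices lie in the `i`-th factor), where all `Q i` and `R i` are
nonzero quotient modules of `H²(𝔻)`, then `Q i = R i` for every `i`. -/
theorem tensor_representation_unique
    {n : ℕ}
    (s : lp (fun _ : ℕ => ℂ) 2 →L[ℂ] lp (fun _ : ℕ => ℂ) 2)
    (hs : ∀ a : ℕ, s (lp.single 2 a (1 : ℂ)) = lp.single 2 (a + 1) (1 : ℂ))
    (Q R : Fin n → Submodule ℂ (lp (fun _ : ℕ => ℂ) 2))
    (hQclosed : ∀ i, IsClosed (Q i : Set (lp (fun _ : ℕ => ℂ) 2)))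
    (hRclosed : ∀ i, IsClosed (R i : Set (lp (fun _ : ℕ => ℂ) 2)))
    (hQinv : ∀ i, ∀ x ∈ Q i, ContinuousLinearMap.adjoint s x ∈ Q i)
    (hRinv : ∀ i, ∀ x ∈ R i, ContinuousLinearMap.adjoint s x ∈ R i)
    (hQne : ∀ i, Q i ≠ ⊥) (hRne : ∀ i, R i ≠ ⊥)
    (heq :
      {f : lp (fun _ : Fin n → ℕ => ℂ) 2 | ∀ (i : Fin n) (g : Fin n → ℕ), ∃ q ∈ Q i,
        ∀ a : ℕ, (q : ∀ _ : ℕ, ℂ) a = (f : ∀ _ : Fin n → ℕ, ℂ) (Function.update g i a)}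
      =
      {f : lp (fun _ : Fin n → ℕ => ℂ) 2 | ∀ (i : Fin n) (g : Fin n → ℕ), ∃ q ∈ R i,
        ∀ a : ℕ, (q : ∀ _ : ℕ, ℂ) a = (f : ∀ _ : Fin n → ℕ, ℂ) (Function.update g i a)}) :
    ∀ i, Q i = R i := by
  intro i
  exact le_antisymm (tensor_le_aux Q R hQne heq.subset i)
    (tensor_le_aux R Q hRne heq.symm.subset i)
end

section
/- Let Θ_{i_1}, ..., Θ_{i_m} be one-variable inner functions in distinct variables i_1 < ... < i_m, with extensions Θ̃_{i_j}(z) = Θ_{i_j}(z_{i_j}) to 𝔻ⁿ. Then the submodule S = Θ̃_{i_1} H²(𝔻ⁿ) + ... + Θ̃_{i_m} H²(𝔻ⁿ) is closed, and the orthogonal projection onto S is I - ∏_{j=1}^m (I - M_{Θ̃_{i_j}} M_{Θ̃_{i_j}}^*). -/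
open ContinuousLinearMap

open scoped InnerProductSpace

/-!
Write `A = T j`, `B = T k`, depending on the variables `a ≠ b`. Commuting with every shift makes
the matrix of `A` in the monomial basis translation invariant and upper triangular, and
commuting with the backward shifts in the other variables confines column `q` to the ray
`q + ℕ eₐ`. So in the `(r, p)` entry of `A B*` only the index `p ⊓ r` contributes, in that of
`B* A` only `p ⊔ r`, and a translation identifies the two products: the `T j` doubly commute.

Doubly commuting isometries commute (in a C⋆-algebra `(uv - vu)⋆(uv - vu)` expands to `0`), so
the range projections `P j = T j (T j)*` commute, `Q = ∏ (1 - P j)` is a projection killing every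
`P j`, and `E = 1 - Q` is a projection. Telescoping `1 - (1 - P) Q' = P Q' + (1 - Q')` shows
that `ran E ⊆ ∑ ran P j`, and `E` fixes `∑ ran T j`; its range is closed as that of an idempotent.
-/

section StarRing

variable {R : Type*}

theorem commute_of_star_mul_self_eq_one [NormedRing R] [StarRing R] [CStarRing R] {u v : R}
    (hu : star u * u = 1) (hv : star v * v = 1) (huv : star u * v = v * star u) :
    Commute u v := by
  have hvu : star v * u = u * star v := by simpa using congrArg star huv
  rw [commute_iff_eq, ← sub_eq_zero, ← CStarRing.star_mul_self_eq_zero_iff]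
  calc star (u * v - v * u) * (u * v - v * u)
      = star v * (star u * u) * v - star v * (star u * v) * u
        - star u * (star v * u) * v + star u * (star v * v) * u := by
        simp only [star_sub, star_mul]; noncomm_ring
    _ = 0 := by simp [huv, hvu, ← mul_assoc, hu, hv]

variable [Ring R]

theorem isIdempotentElem_mul_of_mul_eq_one {t l : R} (h : l * t = 1) :
    IsIdempotentElem (t * l) := by
  rw [IsIdempotentElem, mul_assoc, ← mul_assoc l, h, one_mul]

theorem list_prod_mul_eq_zero {l : List R} {a x : R} (ha : a ∈ l) (hax : a * x = 0)
    (hcomm : ∀ q ∈ l, Commute q x) : l.prod * x = 0 := by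
  induction l with
  | nil => simp at ha
  | cons q l ih =>
    have hcomm' : ∀ q ∈ l, Commute q x := fun q hq => hcomm q (by simp [hq])
    rw [List.prod_cons, mul_assoc]
    rcases List.mem_cons.mp ha with rfl | ha
    · rw [(Commute.list_prod_left l x hcomm').eq, ← mul_assoc, hax, zero_mul]
    · rw [ih ha hcomm', mul_zero]

theorem IsStarProjection.list_prod [StarRing R] {l : List R}
    (hl : ∀ p ∈ l, IsStarProjection p) (hcomm : ∀ p ∈ l, ∀ q ∈ l, Commute p q) :
    IsStarProjection l.prod := by
  induction l with
  | nil => exact IsStarProjection.one R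
  | cons p l ih =>
    rw [List.prod_cons]
    exact (hl p (by simp)).mul (ih (fun q hq => hl q (by simp [hq]))
      fun q hq r hr => hcomm q (by simp [hq]) r (by simp [hr]))
      (Commute.list_prod_right _ _ fun q hq => hcomm p (by simp) q (by simp [hq]))

theorem isStarProjection_one_sub_list_prod_one_sub [StarRing R] {ι : Type*} {p : ι → R}
    (hp : ∀ i, IsStarProjection (p i)) (hcomm : ∀ i j, Commute (p i) (p j)) (l : List ι) :
    IsStarProjection (1 - (l.map fun i => 1 - p i).prod) := by
  refine (IsStarProjection.list_prod ?_ ?_).one_sub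
  · simp only [List.mem_map]
    rintro _ ⟨i, -, rfl⟩
    exact (hp i).one_sub
  · simp only [List.mem_map]
    rintro _ ⟨i, -, rfl⟩ _ ⟨j, -, rfl⟩
    exact (Commute.one_right _).sub_right ((Commute.one_left _).sub_left (hcomm i j))

theorem isStarProjection_mul_star [StarRing R] {u : R} (hu : star u * u = 1) :
    IsStarProjection (u * star u) :=
  ⟨isIdempotentElem_mul_of_mul_eq_one hu, by simp [IsSelfAdjoint]⟩

theorem commute_mul_star_mul_star [StarRing R] {u v : R} (h : Commute u v)
    (huv : star u * v = v * star u) : Commute (u * star u) (v * star v) := by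
  have hvu : star v * u = u * star v := by simpa using congrArg star huv
  have h' : star u * star v = star v * star u := by simpa using congrArg star h.eq.symm
  calc u * star u * (v * star v) = u * v * (star u * star v) := by
        rw [mul_assoc, ← mul_assoc (star u), huv]; noncomm_ring
    _ = v * star v * (u * star u) := by
        rw [h.eq, h', mul_assoc, ← mul_assoc u, ← hvu]; noncomm_ring

end StarRing

section Range

variable {R M ι : Type*} [Ring R] [TopologicalSpace M] [AddCommGroup M]
  [IsTopologicalAddGroup M] [Module R M]
  [Fintype ι] [DecidableEq ι]

theorem exists_sum_eq_one_sub_list_prod_one_sub_apply (P : ι → M →L[R] M) (l : List ι)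
    (x : M) :
    ∃ y : ι → M, (∀ j, y j ∈ Set.range (P j)) ∧
      (1 - (l.map fun j => 1 - P j).prod) x = ∑ j, y j := by
  induction l with
  | nil => exact ⟨0, fun j => ⟨0, map_zero _⟩, by simp⟩
  | cons a l ih =>
    obtain ⟨y, hy, hsum⟩ := ih
    set Q := (l.map fun j => 1 - P j).prod
    refine ⟨y + Pi.single a (P a (Q x)), fun j => ?_, ?_⟩
    · obtain ⟨z, hz⟩ := hy j
      by_cases hj : j = a
      · subst hj; exact ⟨z + Q x, by simp [hz]⟩
      · exact ⟨z, by simp [hz, hj]⟩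
    · have : (1 : M →L[R] M) - (1 - P a) * Q = P a * Q + (1 - Q) := by noncomm_ring
      rw [List.map_cons, List.prod_cons, this, add_apply, mul_apply_eq_comp, hsum]
      simp only [Pi.add_apply, Finset.sum_add_distrib, Finset.sum_pi_single', Finset.mem_univ,
        if_true, add_comm]

theorem range_one_sub_list_prod_one_sub (T L : ι → M →L[R] M) (hLT : ∀ j, L j * T j = 1)
    (hcomm : ∀ j k, Commute (T j * L j) (T k * L k)) {l : List ι} (hl : ∀ j, j ∈ l) :
    Set.range ((1 : M →L[R] M) - (l.map fun j => 1 - T j * L j).prod) =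
      {x | ∃ y : ι → M, (∀ j, y j ∈ Set.range (T j)) ∧ x = ∑ j, y j} := by
  ext x
  constructor
  · rintro ⟨x, rfl⟩
    obtain ⟨y, hy, hsum⟩ :=
      exists_sum_eq_one_sub_list_prod_one_sub_apply (fun j => T j * L j) l x
    refine ⟨y, fun j => ?_, hsum⟩
    obtain ⟨z, hz⟩ := hy j
    exact ⟨L j z, hz⟩
  · rintro ⟨y, hy, rfl⟩
    refine ⟨∑ j, y j, ?_⟩
    have hQ : ∀ j, (l.map fun j => 1 - T j * L j).prod * T j = 0 := fun j => by
      have hQP := list_prod_mul_eq_zero (List.mem_map_of_mem (f := fun j => 1 - T j * L j) (hl j))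
        (x := T j * L j) (isIdempotentElem_mul_of_mul_eq_one (hLT j)).one_sub_mul_self
        (by
          simp only [List.mem_map]
          rintro _ ⟨k, -, rfl⟩
          exact (Commute.one_left _).sub_left (hcomm k j))
      calc _ = (l.map fun j => 1 - T j * L j).prod * (T j * L j) * T j := by
            rw [mul_assoc, mul_assoc, hLT, mul_one]
        _ = 0 := by rw [hQP, zero_mul]
    have hQy : ∀ j, (l.map fun j => 1 - T j * L j).prod (y j) = 0 := fun j => by
      obtain ⟨z, hz⟩ := hy j
      rw [← hz, ← mul_apply_eq_comp, hQ, zero_apply]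
    rw [sub_apply, one_apply_eq_self, map_sum, Finset.sum_eq_zero fun j _ => hQy j, sub_zero]

end Range

theorem Pi.single_le_of_le {σ : Type*} [DecidableEq σ] {q : σ → ℕ} {i : σ} {k : ℕ}
    (h : k ≤ q i) : Pi.single i k ≤ q := by
  intro j
  by_cases hj : j = i
  · subst hj; simpa using h
  · simp [hj]

namespace PolydiscHardy

variable {σ : Type*} [Fintype σ]

local notation "ℓ²(" σ ")" => lp (fun _ : σ → ℕ => ℂ) 2

/-- `ℓ²(σ)` is `H²(𝔻^σ)` through Taylor coefficients, and `monomial q` is `z^q`. -/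
noncomputable def monomial (q : σ → ℕ) : ℓ²(σ) := lp.single 2 q 1

theorem monomial_apply (q p : σ → ℕ) : monomial q p = if p = q then 1 else 0 := by
  simp [monomial, lp.single_apply, Pi.single_apply]

theorem inner_monomial_left (r : σ → ℕ) (x : ℓ²(σ)) : ⟪monomial r, x⟫_ℂ = x r := by
  simp [monomial, lp.inner_single_left, RCLike.inner_apply]

theorem adjoint_monomial_apply (C : ℓ²(σ) →L[ℂ] ℓ²(σ)) (p s : σ → ℕ) :
    adjoint C (monomial p) s = starRingEnd ℂ (C (monomial s) p) := by
  rw [← inner_monomial_left, adjoint_inner_right, ← inner_conj_symm, inner_monomial_left]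

theorem apply_apply_eq_tsum (C : ℓ²(σ) →L[ℂ] ℓ²(σ)) (x : ℓ²(σ)) (r : σ → ℕ) :
    C x r = ∑' s, C (monomial s) r * x s := by
  rw [← inner_monomial_left, ← adjoint_inner_left, lp.inner_eq_tsum]
  simp [adjoint_monomial_apply, RCLike.inner_apply, mul_comm]

theorem ext_monomial_apply {C D : ℓ²(σ) →L[ℂ] ℓ²(σ)}
    (h : ∀ p r, C (monomial p) r = D (monomial p) r) : C = D := by
  ext x r
  simp only [apply_apply_eq_tsum C x, apply_apply_eq_tsum D x, h]

section Shift

variable [DecidableEq σ]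

variable {S : σ → ℓ²(σ) →L[ℂ] ℓ²(σ)}
  (hS : ∀ (i : σ) (q : σ → ℕ), S i (monomial q) = monomial (q + Pi.single i 1))
include hS

theorem adjoint_shift_apply (i : σ) (x : ℓ²(σ)) (p : σ → ℕ) :
    adjoint (S i) x p = x (p + Pi.single i 1) := by
  rw [← inner_monomial_left, adjoint_inner_right, hS, inner_monomial_left]

theorem shift_apply_add_single (i : σ) (x : ℓ²(σ)) (p : σ → ℕ) :
    S i x (p + Pi.single i 1) = x p := by
  rw [apply_apply_eq_tsum, tsum_eq_single p]
  · simp [hS, monomial_apply]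
  · intro s hs
    simp [hS, monomial_apply, Ne.symm hs]

theorem shift_apply_of_eq_zero (i : σ) (x : ℓ²(σ)) {p : σ → ℕ} (hp : p i = 0) :
    S i x p = 0 := by
  have hne : ∀ s : σ → ℕ, p ≠ s + Pi.single i 1 := fun s h => by
    simpa [hp] using congrFun h i
  simp [apply_apply_eq_tsum, hS, monomial_apply, hne]

theorem adjoint_shift_monomial_of_eq_zero (i : σ) {q : σ → ℕ} (hq : q i = 0) :
    adjoint (S i) (monomial q) = 0 := by
  have hne : ∀ p : σ → ℕ, p + Pi.single i 1 ≠ q := fun p h => by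
    simpa [hq] using congrFun h i
  ext p
  simp [adjoint_shift_apply hS, monomial_apply, hne]

end Shift

/-- With `S i` multiplication by `zᵢ`, this is what makes `A` the multiplication by a function
of `zₐ` alone. -/
structure IsMultiplierInVariable (S : σ → ℓ²(σ) →L[ℂ] ℓ²(σ)) (a : σ)
    (A : ℓ²(σ) →L[ℂ] ℓ²(σ)) : Prop where
  comp_shift : ∀ i, A ∘L S i = S i ∘L A
  comp_adjoint_shift : ∀ i, i ≠ a → A ∘L adjoint (S i) = adjoint (S i) ∘L A

namespace IsMultiplierInVariable

variable [DecidableEq σ] {S : σ → ℓ²(σ) →L[ℂ] ℓ²(σ)}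
  (hS : ∀ (i : σ) (q : σ → ℕ), S i (monomial q) = monomial (q + Pi.single i 1))
  {a : σ} {A : ℓ²(σ) →L[ℂ] ℓ²(σ)} (hA : IsMultiplierInVariable S a A)
include hS hA

theorem apply_monomial_add_single_apply_add_single (i : σ) (q p : σ → ℕ) :
    A (monomial (q + Pi.single i 1)) (p + Pi.single i 1) = A (monomial q) p := by
  rw [← hS, ← comp_apply, hA.comp_shift, comp_apply, shift_apply_add_single hS]

theorem apply_monomial_apply_eq_zero {i : σ} {q p : σ → ℕ} (hq : q i ≠ 0) (hp : p i = 0) :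
    A (monomial q) p = 0 := by
  rw [← tsub_add_cancel_of_le (Pi.single_le_of_le (Nat.one_le_iff_ne_zero.mpr hq)), ← hS,
    ← comp_apply, hA.comp_shift, comp_apply, shift_apply_of_eq_zero hS _ _ hp]

theorem apply_monomial_apply_add_single_eq_zero {i : σ} (hi : i ≠ a) {q : σ → ℕ}
    (hq : q i = 0) (p : σ → ℕ) : A (monomial q) (p + Pi.single i 1) = 0 := by
  rw [← adjoint_shift_apply hS, ← comp_apply, ← hA.comp_adjoint_shift i hi, comp_apply,
    adjoint_shift_monomial_of_eq_zero hS i hq, map_zero]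
  rfl

theorem apply_monomial_add_apply_add (d q p : σ → ℕ) :
    A (monomial (q + d)) (p + d) = A (monomial q) p := by
  induction d using Pi.single_induction generalizing q p with
  | zero => simp
  | add d₁ d₂ h₁ h₂ => rw [← add_assoc, ← add_assoc, h₂, h₁]
  | single i k =>
    induction k generalizing q p with
    | zero => simp
    | succ k ih =>
      rw [Pi.single_add, ← add_assoc, ← add_assoc,
        apply_monomial_add_single_apply_add_single hS hA, ih]

theorem le_of_apply_monomial_apply_ne_zero {q s : σ → ℕ}
    (h : A (monomial q) s ≠ 0) : q ≤ s := by
  intro i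
  by_contra! hi
  have hle : Pi.single i (s i) ≤ q := Pi.single_le_of_le hi.le
  have hle' : Pi.single i (s i) ≤ s := Pi.single_le_of_le le_rfl
  have key := apply_monomial_add_apply_add hS hA (Pi.single i (s i))
    (q - Pi.single i (s i)) (s - Pi.single i (s i))
  rw [tsub_add_cancel_of_le hle, tsub_add_cancel_of_le hle'] at key
  rw [key] at h
  exact h (apply_monomial_apply_eq_zero hS hA (i := i)
    (by simpa using Nat.sub_ne_zero_of_lt hi) (by simp))

theorem apply_monomial_zero_apply_eq_zero {s : σ → ℕ} {i : σ} (hi : i ≠ a)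
    (hs : s i ≠ 0) : A (monomial 0) s = 0 := by
  rw [← tsub_add_cancel_of_le (Pi.single_le_of_le (Nat.one_le_iff_ne_zero.mpr hs))]
  exact apply_monomial_apply_add_single_eq_zero hS hA hi rfl _

theorem apply_eq_of_apply_monomial_apply_ne_zero {q s : σ → ℕ}
    (h : A (monomial q) s ≠ 0) {i : σ} (hi : i ≠ a) : s i = q i := by
  have hqs := le_of_apply_monomial_apply_ne_zero hS hA h
  have key := apply_monomial_add_apply_add hS hA q 0 (s - q)
  rw [zero_add, tsub_add_cancel_of_le hqs] at key
  rw [key] at h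
  have hsq : (s - q) i = 0 := not_not.mp (mt (apply_monomial_zero_apply_eq_zero hS hA hi) h)
  rw [Pi.sub_apply] at hsq
  have : q i ≤ s i := hqs i
  omega

/- Only `s = p ⊓ r` contributes to the `(r, p)` entry of `A B*` and only `s = p ⊔ r` to that of
`B* A`; the translation by `p - p ⊓ r`, resp. `r - p ⊓ r`, matches the two products. -/
theorem comp_adjoint_comm {b : σ} {B : ℓ²(σ) →L[ℂ] ℓ²(σ)}
    (hB : IsMultiplierInVariable S b B) (hab : a ≠ b) : A ∘L adjoint B = adjoint B ∘L A := by
  refine ext_monomial_apply fun p r => ?_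
  have hinf : ∀ s, A (monomial s) r * starRingEnd ℂ (B (monomial s) p) ≠ 0 → s = p ⊓ r := by
    intro s h
    obtain ⟨hA₁, hB₁⟩ := mul_ne_zero_iff.mp h
    rw [map_ne_zero] at hB₁
    ext i
    have : s i ≤ r i := le_of_apply_monomial_apply_ne_zero hS hA hA₁ i
    have : s i ≤ p i := le_of_apply_monomial_apply_ne_zero hS hB hB₁ i
    simp only [Pi.inf_apply]
    by_cases hia : i = a
    · subst hia
      have := apply_eq_of_apply_monomial_apply_ne_zero hS hB hB₁ hab
      omega
    · have := apply_eq_of_apply_monomial_apply_ne_zero hS hA hA₁ hia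
      omega
  have hsup : ∀ s, starRingEnd ℂ (B (monomial r) s) * A (monomial p) s ≠ 0 → s = p ⊔ r := by
    intro s h
    obtain ⟨hB₁, hA₁⟩ := mul_ne_zero_iff.mp h
    rw [map_ne_zero] at hB₁
    ext i
    have : r i ≤ s i := le_of_apply_monomial_apply_ne_zero hS hB hB₁ i
    have : p i ≤ s i := le_of_apply_monomial_apply_ne_zero hS hA hA₁ i
    simp only [Pi.sup_apply]
    by_cases hia : i = a
    · subst hia
      have := apply_eq_of_apply_monomial_apply_ne_zero hS hB hB₁ hab
      omega
    · have := apply_eq_of_apply_monomial_apply_ne_zero hS hA hA₁ hia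
      omega
  rw [comp_apply, comp_apply, apply_apply_eq_tsum A (adjoint B _),
    apply_apply_eq_tsum (adjoint B) (A _)]
  simp only [adjoint_monomial_apply]
  rw [tsum_eq_single (p ⊓ r) fun s hs => not_not.mp (mt (hinf s) hs),
    tsum_eq_single (p ⊔ r) fun s hs => not_not.mp (mt (hsup s) hs), mul_comm]
  have hB_shift := apply_monomial_add_apply_add hS hB (r - p ⊓ r) (p ⊓ r) p
  have hA_shift := apply_monomial_add_apply_add hS hA (p - p ⊓ r) (p ⊓ r) r
  have add_sub_inf : ∀ x y : σ → ℕ, x + (y - x ⊓ y) = x ⊔ y := fun x y => by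
    ext i; simp only [Pi.add_apply, Pi.sub_apply, Pi.inf_apply, Pi.sup_apply]; omega
  rw [add_tsub_cancel_of_le inf_le_right, add_sub_inf] at hB_shift
  rw [add_tsub_cancel_of_le inf_le_left, inf_comm, add_sub_inf, sup_comm] at hA_shift
  rw [hA_shift, hB_shift, inf_comm]

end IsMultiplierInVariable

end PolydiscHardy

/-- Realize `H²(𝔻ⁿ) ≅ ℓ²(ℕⁿ)` with coordinate shifts `S i`.  Let
`Θ_{i_1}, …, Θ_{i_m}` be one-variable inner functions in distinct variables
`i_1 < ⋯ < i_m` (given by a strictly monotone `ι : Fin m → Fin n`), with extensions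
`Θ̃_{i_j}(z) = Θ_{i_j}(z_{i_j})`; the multiplication operators `T j = M_{Θ̃_{i_j}}` are
isometric multipliers (isometries commuting with every shift) depending only on the variable
`ι j` (they commute with `(S i)*` for every `i ≠ ι j`).  Then the submodule
`𝒮 = Θ̃_{i_1} H²(𝔻ⁿ) + ⋯ + Θ̃_{i_m} H²(𝔻ⁿ)` (the set of sums of elements of the ranges of
the `T j`) is closed, and the orthogonal projection onto `𝒮` is
`E = I - ∏_{j=1}^m (I - T j (T j)*)`. -/
theorem sum_of_extended_inner_ranges_closed_and_projection_formula
    {n : ℕ}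
    (S : Fin n → (lp (fun _ : Fin n → ℕ => ℂ) 2 →L[ℂ] lp (fun _ : Fin n → ℕ => ℂ) 2))
    (hS : ∀ (i : Fin n) (k : Fin n → ℕ),
      S i (lp.single 2 k (1 : ℂ)) = lp.single 2 (k + Pi.single i 1) (1 : ℂ))
    (m : ℕ) (ι : Fin m → Fin n) (hι : StrictMono ι)
    (T : Fin m → (lp (fun _ : Fin n → ℕ => ℂ) 2 →L[ℂ] lp (fun _ : Fin n → ℕ => ℂ) 2))
    (hTiso : ∀ j x, ‖T j x‖ = ‖x‖)
    (hTmult : ∀ j i, T j ∘L S i = S i ∘L T j)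
    (hTvar : ∀ j i, i ≠ ι j →
      T j ∘L ContinuousLinearMap.adjoint (S i)
        = ContinuousLinearMap.adjoint (S i) ∘L T j)
    (E : lp (fun _ : Fin n → ℕ => ℂ) 2 →L[ℂ] lp (fun _ : Fin n → ℕ => ℂ) 2)
    (hE : E = 1 - ((List.finRange m).map
      (fun j => 1 - T j ∘L ContinuousLinearMap.adjoint (T j))).prod) :
    IsClosed {x : lp (fun _ : Fin n → ℕ => ℂ) 2 |
        ∃ y : Fin m → lp (fun _ : Fin n → ℕ => ℂ) 2,
          (∀ j, y j ∈ Set.range (T j)) ∧ x = ∑ j, y j} ∧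
    IsSelfAdjoint E ∧ E ∘L E = E ∧
    Set.range E = {x : lp (fun _ : Fin n → ℕ => ℂ) 2 |
        ∃ y : Fin m → lp (fun _ : Fin n → ℕ => ℂ) 2,
          (∀ j, y j ∈ Set.range (T j)) ∧ x = ∑ j, y j} := by
  have hmult : ∀ j, PolydiscHardy.IsMultiplierInVariable S (ι j) (T j) :=
    fun j => ⟨hTmult j, hTvar j⟩
  have hiso : ∀ j, star (T j) * T j = 1 :=
    fun j => (norm_map_iff_adjoint_comp_self _).mp (hTiso j)
  have hdoubly : ∀ j k, j ≠ k → star (T j) * T k = T k * star (T j) := fun j k hjk =>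
    ((hmult k).comp_adjoint_comm hS (hmult j) (hι.injective.ne hjk.symm)).symm
  have hproj_comm : ∀ j k, Commute (T j * star (T j)) (T k * star (T k)) := by
    intro j k
    rcases eq_or_ne j k with rfl | hjk
    · exact Commute.refl _
    · exact commute_mul_star_mul_star
        (commute_of_star_mul_self_eq_one (hiso j) (hiso k) (hdoubly j k hjk)) (hdoubly j k hjk)
  have hproj : IsStarProjection E := hE ▸ isStarProjection_one_sub_list_prod_one_sub
    (fun j => isStarProjection_mul_star (hiso j)) hproj_comm _
  have hrange : Set.range E = _ := hE ▸ range_one_sub_list_prod_one_sub T (fun j => star (T j))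
    hiso hproj_comm (List.mem_finRange)
  refine ⟨hrange ▸ ContinuousLinearMap.IsIdempotentElem.isClosed_range hproj.isIdempotentElem,
    hproj.isSelfAdjoint, hproj.isIdempotentElem, hrange⟩
end
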